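/- arXiv:2004.01128 — 6 statements merged into one kernel-verified Lean document; each statement's English description precedes it below -/
import Mathlib

section
/- Let B = (e_n) be a basis of a p-Banach space X (0 < p ≤ 1) that is partially-symmetric for largest coefficients with constant Δ_pl. Then B is quasi-greedy for largest coefficients with constant C_ql ≤ (1 + Δ_pl^p)^{1/p}. -/
open Finset

noncomputable section

namespace GreedyQB

/-- The constant `A_p = (2^p - 1)^{-1/p}`. -/
def Ap (p : ℝ) : ℝ := (2 ^ p - 1) ^ (-1 / p)

/-- The constant `B_p`, equal to `2^{1/p} A_p` for real scalars and `4^{1/p} A_p`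
for complex scalars. -/
def Bp (𝕜 : Type*) [RCLike 𝕜] (p : ℝ) : ℝ :=
  if (RCLike.I : 𝕜) = 0 then 2 ^ (1 / p) * Ap p else 4 ^ (1 / p) * Ap p

/-- `η_p(u) = min_{0<t<1} (1-t^p)^{-1/p} (1-(1+A_p⁻¹ u⁻¹ t)^{-p})^{-1/p}`. -/
def eta (p u : ℝ) : ℝ :=
  sInf ((fun t : ℝ => (1 - t ^ p) ^ (-1 / p) *
    (1 - (1 + (Ap p)⁻¹ * u⁻¹ * t) ^ (-p)) ^ (-1 / p)) '' Set.Ioo (0 : ℝ) 1)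

variable {𝕜 X : Type*} [RCLike 𝕜] [AddCommGroup X] [Module 𝕜 X]

/-- A quasi-norm on a vector space `X` over `𝕜`. -/
structure IsQuasiNorm (𝕜 : Type*) [RCLike 𝕜] {X : Type*} [AddCommGroup X]
    [Module 𝕜 X] (q : X → ℝ) : Prop where
  pos : ∀ f : X, f ≠ 0 → 0 < q f
  hom : ∀ (t : 𝕜) (f : X), q (t • f) = ‖t‖ * q f
  quasi : ∃ κ : ℝ, 1 ≤ κ ∧ ∀ f g : X, q (f + g) ≤ κ * (q f + q g)

/-- A `p`-norm on a vector space `X` over `𝕜`. -/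
structure IsPNorm (𝕜 : Type*) [RCLike 𝕜] {X : Type*} [AddCommGroup X]
    [Module 𝕜 X] (p : ℝ) (q : X → ℝ) : Prop where
  pos : ∀ f : X, f ≠ 0 → 0 < q f
  hom : ∀ (t : 𝕜) (f : X), q (t • f) = ‖t‖ * q f
  ptri : ∀ f g : X, q (f + g) ^ p ≤ q f ^ p + q g ^ p

/-- `(e n)` is a (semi-normalized, total, biorthogonal) basis with coordinate
functionals `(c n)` on the space with quasi-norm `q`. -/
structure IsBasis (q : X → ℝ) (e : ℕ → X) (c : ℕ → X →ₗ[𝕜] 𝕜) : Prop where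
  biorth : ∀ n m, c n (e m) = if n = m then (1 : 𝕜) else 0
  total : ∀ f : X, (∀ n, c n f = 0) → f = 0
  semin : ∃ M : ℝ, ∀ n : ℕ, q (e n) ≤ M ∧ ∀ f : X, ‖c n f‖ ≤ M * q f

/-- The projection `P_A(f) = ∑_{n ∈ A} e_n^*(f) e_n`. -/
def proj (c : ℕ → X →ₗ[𝕜] 𝕜) (e : ℕ → X) (A : Finset ℕ) (f : X) : X :=
  ∑ n ∈ A, c n f • e n

/-- The partial sum operator `S_k`: projection onto the first `k` basis vectors. -/
def psum (c : ℕ → X →ₗ[𝕜] 𝕜) (e : ℕ → X) (k : ℕ) (f : X) : X :=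
  proj c e (Finset.range k) f

/-- The indicator sum `1_{εA} = ∑_{n ∈ A} ε_n e_n`. -/
def indSum (e : ℕ → X) (ε : ℕ → 𝕜) (A : Finset ℕ) : X :=
  ∑ n ∈ A, ε n • e n

/-- `ε` is a collection of signs on `A`. -/
def IsSign (ε : ℕ → 𝕜) (A : Finset ℕ) : Prop := ∀ n ∈ A, ‖ε n‖ = 1

/-- `A` is a greedy set of `f`: coefficients on `A` dominate those outside `A`. -/
def GreedySet (c : ℕ → X →ₗ[𝕜] 𝕜) (f : X) (A : Finset ℕ) : Prop :=
  ∀ n ∈ A, ∀ m ∉ A, ‖c m f‖ ≤ ‖c n f‖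

/-- The basis is `C`-partially-greedy:
`‖f - P_A f‖ ≤ C inf_{k ≤ |A|} ‖f - S_k f‖` for every greedy set `A` of `f`. -/
def PartiallyGreedy (q : X → ℝ) (e : ℕ → X) (c : ℕ → X →ₗ[𝕜] 𝕜) (C : ℝ) : Prop :=
  ∀ (f : X) (A : Finset ℕ), GreedySet c f A →
    ∀ k ≤ A.card, q (f - proj c e A f) ≤ C * q (f - psum c e k f)

/-- The basis is `C`-quasi-greedy. -/
def QuasiGreedy (q : X → ℝ) (e : ℕ → X) (c : ℕ → X →ₗ[𝕜] 𝕜) (C : ℝ) : Prop :=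
  ∀ (f : X) (A : Finset ℕ), GreedySet c f A → q (proj c e A f) ≤ C * q f

/-- The basis is `C`-quasi-greedy for largest coefficients. -/
def QGLC (q : X → ℝ) (e : ℕ → X) (c : ℕ → X →ₗ[𝕜] 𝕜) (C : ℝ) : Prop :=
  ∀ (A : Finset ℕ) (ε : ℕ → 𝕜) (f : X), IsSign ε A →
    (∀ n ∈ A, c n f = 0) → (∀ n, ‖c n f‖ ≤ 1) →
    q (indSum e ε A) ≤ C * q (f + indSum e ε A)

/-- The basis is `Δ`-partially-symmetric for largest coefficients. -/
def PSLC (q : X → ℝ) (e : ℕ → X) (c : ℕ → X →ₗ[𝕜] 𝕜) (Δ : ℝ) : Prop :=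
  ∀ (A B : Finset ℕ) (ε ε' : ℕ → 𝕜) (f : X),
    IsSign ε A → IsSign ε' B → A.card ≤ B.card →
    (∀ n, ‖c n f‖ ≤ 1) →
    (∀ a ∈ A, ∀ n, c n f ≠ 0 → a < n) →
    (∀ a ∈ A, ∀ b ∈ B, a < b) →
    (∀ b ∈ B, c b f = 0) →
    q (f + indSum e ε A) ≤ Δ * q (f + indSum e ε' B)

/-- The basis is `Δ`-super-conservative. -/
def SuperConservative (q : X → ℝ) (e : ℕ → X) (c : ℕ → X →ₗ[𝕜] 𝕜) (Δ : ℝ) : Prop :=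
  ∀ (A B : Finset ℕ) (ε ε' : ℕ → 𝕜), IsSign ε A → IsSign ε' B →
    A.card ≤ B.card → (∀ a ∈ A, ∀ b ∈ B, a < b) →
    q (indSum e ε A) ≤ Δ * q (indSum e ε' B)

/-- The basis is `Δ`-conservative. -/
def Conservative (q : X → ℝ) (e : ℕ → X) (Δ : ℝ) : Prop :=
  ∀ A B : Finset ℕ, A.card ≤ B.card → (∀ a ∈ A, ∀ b ∈ B, a < b) →
    q (∑ n ∈ A, e n) ≤ Δ * q (∑ n ∈ B, e n)

/-- The sign of a scalar, `sgn t = t / |t|` (with `sgn 0 = 1`). -/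
def sgn (𝕜 : Type*) [RCLike 𝕜] (t : 𝕜) : 𝕜 := if t = 0 then 1 else (‖t‖ : 𝕜)⁻¹ * t

/-- `min_{n ∈ A} |e_n^*(f)|`. -/
def minCoeff (c : ℕ → X →ₗ[𝕜] 𝕜) (f : X) (A : Finset ℕ) : ℝ :=
  sInf ((fun n => ‖c n f‖) '' (A : Set ℕ))

/-- The restricted truncation operator
`U(f,A) = (min_{n∈A} |e_n^*(f)|) ∑_{n∈A} sgn(e_n^*(f)) e_n`. -/
def restrTrunc (e : ℕ → X) (c : ℕ → X →ₗ[𝕜] 𝕜) (f : X) (A : Finset ℕ) : X :=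
  ((minCoeff c f A : ℝ) : 𝕜) • ∑ n ∈ A, sgn 𝕜 (c n f) • e n

/-- The truncation operator `T(f,A) = U(f,A) + P_{A^c}(f)`. -/
def trunc (e : ℕ → X) (c : ℕ → X →ₗ[𝕜] 𝕜) (f : X) (A : Finset ℕ) : X :=
  restrTrunc e c f A + (f - proj c e A f)

/-- `(k, z) ∈ D(f)`: `supp z` is finite, `k < min (supp z)`,
`supp z ∩ supp f = ∅`, `k ≤ |supp z|`, and
`max_{n ∈ supp f} |e_n^*(f)| ≤ min_{n ∈ supp z} |e_n^*(z)|`. -/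
def Dmem (c : ℕ → X →ₗ[𝕜] 𝕜) (f z : X) (k : ℕ) : Prop :=
  {n | c n z ≠ 0}.Finite ∧ (∀ n, c n z ≠ 0 → k ≤ n) ∧
  (∀ n, c n z ≠ 0 → c n f = 0) ∧ k ≤ {n | c n z ≠ 0}.ncard ∧
  (∀ n m, c m z ≠ 0 → ‖c n f‖ ≤ ‖c m z‖)

/-- The quantity `‖f‖_a = inf { ‖f - S_k f + z‖ : (k,z) ∈ D(f) }`. -/
def qa (q : X → ℝ) (e : ℕ → X) (c : ℕ → X →ₗ[𝕜] 𝕜) (f : X) : ℝ :=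
  sInf {y : ℝ | ∃ (z : X) (k : ℕ), Dmem c f z k ∧ y = q (f - psum c e k f + z)}

variable (q : X → ℝ) (e : ℕ → X) (c : ℕ → X →ₗ[𝕜] 𝕜)


lemma qnonneg {p : ℝ} {q : X → ℝ} (hq : IsPNorm 𝕜 p q) (f : X) : 0 ≤ q f := by
  rcases eq_or_ne f 0 with rfl | h
  · have := hq.hom (0 : 𝕜) 0
    simp at this
    simp [this]
  · exact (hq.pos f h).le

lemma qneg {p : ℝ} {q : X → ℝ} (hq : IsPNorm 𝕜 p q) (f : X) : q (-f) = q f := by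
  have := hq.hom (-1 : 𝕜) f
  simpa using this

/-- `Δ_pl`-partial symmetry for largest coefficients implies
quasi-greediness for largest coefficients with constant `≤ (1 + Δ_pl^p)^{1/p}`. -/
theorem stmt2 (p : ℝ) (hp : 0 < p) (hp1 : p ≤ 1)
    (hq : IsPNorm 𝕜 p q) (hb : IsBasis q e c)
    (Δpl : ℝ) (hΔ : PSLC q e c Δpl) :
    QGLC q e c ((1 + Δpl ^ p) ^ (1 / p)) := by
  intro A ε f hε hzf hle1
  set s := indSum e ε A with hs
  -- q f ≤ Δpl * q (f + s), by PSLC with the empty set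
  have hqf : q f ≤ Δpl * q (f + s) := by
    have h := hΔ ∅ A (fun _ => 1) ε f (by intro n hn; simp at hn) hε (by simp) hle1
      (by intro a ha; simp at ha) (by intro a ha; simp at ha) hzf
    simpa [indSum, hs] using h
  -- Δpl ≥ 0 (in fact ≥ 1), using f = e 0
  have hΔ0 : 0 ≤ Δpl := by
    have he0 : (e 0 : X) ≠ 0 := by
      intro h
      have hb0 := hb.biorth 0 0
      simp [h] at hb0
    have hcn : ∀ n, ‖c n (e 0)‖ ≤ 1 := by
      intro n
      rw [hb.biorth n 0]
      split <;> simp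
    have h := hΔ ∅ ∅ (fun _ => 1) (fun _ => 1) (e 0)
      (by intro n hn; simp at hn) (by intro n hn; simp at hn) le_rfl hcn
      (by intro a ha; simp at ha) (by intro a ha; simp at ha)
      (by intro b hb'; simp at hb')
    have h2 : q (e 0) ≤ Δpl * q (e 0) := by simpa [indSum] using h
    nlinarith [hq.pos (e 0) he0]
  have hfs : 0 ≤ q (f + s) := qnonneg hq _
  have hps : 0 ≤ q s := qnonneg hq _
  -- p-triangle inequality: q s ^ p ≤ q (f+s) ^ p + q f ^ p
  have h1 : q s ^ p ≤ q (f + s) ^ p + q f ^ p := by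
    have h := hq.ptri (f + s) (-f)
    have heq : f + s + -f = s := by abel
    rw [heq, qneg hq] at h
    exact h
  have h2 : q f ^ p ≤ Δpl ^ p * q (f + s) ^ p := by
    calc q f ^ p ≤ (Δpl * q (f + s)) ^ p :=
          Real.rpow_le_rpow (qnonneg hq _) hqf hp.le
      _ = Δpl ^ p * q (f + s) ^ p := Real.mul_rpow hΔ0 hfs
  have h3 : q s ^ p ≤ (1 + Δpl ^ p) * q (f + s) ^ p := by nlinarith
  have hC0 : 0 ≤ (1 + Δpl ^ p) ^ (1 / p) := by positivity
  rw [← Real.rpow_le_rpow_iff hps (by positivity) hp]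
  calc q s ^ p ≤ (1 + Δpl ^ p) * q (f + s) ^ p := h3
    _ = ((1 + Δpl ^ p) ^ (1 / p)) ^ p * q (f + s) ^ p := by
        rw [← Real.rpow_mul (by positivity), one_div_mul_cancel hp.ne', Real.rpow_one]
    _ = ((1 + Δpl ^ p) ^ (1 / p) * q (f + s)) ^ p :=
        (Real.mul_rpow hC0 hfs).symm

end GreedyQB
end
end

section
/- Let B = (e_n) be a basis of a p-Banach space X (0 < p ≤ 1) that is super-conservative with constant Δ_s and quasi-greedy for largest coefficients with constant C_ql. Then B is partially-symmetric for largest coefficients with constant Δ_pl ≤ (1 + (1 + Δ_s^p)·C_ql^p)^{1/p}. -/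
open Finset

noncomputable section

namespace GreedyQB

variable {𝕜 X : Type*} [RCLike 𝕜] [AddCommGroup X] [Module 𝕜 X]

variable (q : X → ℝ) (e : ℕ → X) (c : ℕ → X →ₗ[𝕜] 𝕜)


/-- super-conservative + quasi-greedy for largest coefficients implies
partially-symmetric for largest coefficients with `Δ_pl ≤ (1 + (1 + Δ_s^p) C_ql^p)^{1/p}`. -/
theorem stmt4 (p : ℝ) (hp : 0 < p) (hp1 : p ≤ 1)
    (hq : IsPNorm 𝕜 p q) (hb : IsBasis q e c)
    (Δs Cql : ℝ) (hs : SuperConservative q e c Δs) (hql : QGLC q e c Cql) :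
    PSLC q e c ((1 + (1 + Δs ^ p) * Cql ^ p) ^ (1 / p)) := by
  intro A B ε ε' f hε hε' hcard hcoef _hAf hAB hBf
  have hq0 : ∀ x : X, 0 ≤ q x := by
    intro x
    rcases eq_or_ne x 0 with h | h
    · subst h
      have h0 : q ((0:𝕜) • (0:X)) = ‖(0:𝕜)‖ * q 0 := hq.hom 0 0
      simp only [zero_smul, norm_zero, zero_mul] at h0
      exact h0.ge
    · exact (hq.pos x h).le
  have hqneg : ∀ x : X, q (-x) = q x := by
    intro x
    have := hq.hom (-1 : 𝕜) x
    simpa using this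
  have hek : ∀ k : ℕ, e k ≠ 0 := by
    intro k h
    have := hb.biorth k k
    rw [h] at this
    simp at this
  have hCql : 0 ≤ Cql := by
    have h1 := hql {0} (fun _ => (1:𝕜)) 0 (by intro n _; simp) (by simp) (by simp)
    have h2 : indSum e (fun _ => (1:𝕜)) {0} = e 0 := by simp [indSum]
    rw [h2] at h1
    simp only [zero_add] at h1
    nlinarith [hq.pos (e 0) (hek 0)]
  have hΔs : 0 ≤ Δs := by
    have h1 := hs {0} {1} (fun _ => (1:𝕜)) (fun _ => (1:𝕜))
      (by intro n _; simp) (by intro n _; simp) (by simp) (by simp)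
    have h2 : indSum e (fun _ => (1:𝕜)) {0} = e 0 := by simp [indSum]
    have h3 : indSum e (fun _ => (1:𝕜)) {1} = e 1 := by simp [indSum]
    rw [h2, h3] at h1
    nlinarith [hq.pos (e 0) (hek 0), hq.pos (e 1) (hek 1)]
  set z := indSum e ε' B with hz
  set w := indSum e ε A with hw
  have h1 : q z ≤ Cql * q (f + z) := hql B ε' f hε' hBf hcoef
  have h2 : q w ≤ Δs * q z := hs A B ε ε' hε hε' hcard hAB
  have h3 : q f ^ p ≤ q (f + z) ^ p + q z ^ p := by
    have h := hq.ptri (f + z) (-z)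
    rw [add_neg_cancel_right, hqneg] at h
    exact h
  have h4 : q (f + w) ^ p ≤ q f ^ p + q w ^ p := hq.ptri f w
  have hzp : q z ^ p ≤ Cql ^ p * q (f + z) ^ p := by
    calc q z ^ p ≤ (Cql * q (f + z)) ^ p :=
          Real.rpow_le_rpow (hq0 z) h1 hp.le
      _ = Cql ^ p * q (f + z) ^ p := Real.mul_rpow hCql (hq0 _)
  have hwp : q w ^ p ≤ Δs ^ p * (Cql ^ p * q (f + z) ^ p) := by
    calc q w ^ p ≤ (Δs * q z) ^ p := Real.rpow_le_rpow (hq0 w) h2 hp.le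
      _ = Δs ^ p * q z ^ p := Real.mul_rpow hΔs (hq0 _)
      _ ≤ Δs ^ p * (Cql ^ p * q (f + z) ^ p) :=
          mul_le_mul_of_nonneg_left hzp (Real.rpow_nonneg hΔs p)
  have key : q (f + w) ^ p ≤ (1 + (1 + Δs ^ p) * Cql ^ p) * q (f + z) ^ p := by
    nlinarith [h3, h4, hzp, hwp]
  have hfin := Real.rpow_le_rpow (Real.rpow_nonneg (hq0 (f + w)) p) key
    (by positivity : (0:ℝ) ≤ 1 / p)
  rw [one_div] at hfin ⊢
  rw [Real.rpow_rpow_inv (hq0 _) hp.ne',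
    Real.mul_rpow (by positivity) (Real.rpow_nonneg (hq0 _) p),
    Real.rpow_rpow_inv (hq0 _) hp.ne'] at hfin
  exact hfin

end GreedyQB
end
end

section
/- Let B = (e_n) be a basis of a p-Banach space X (0 < p ≤ 1) that is partially-greedy with constant C_pg. Then B is quasi-greedy with constant C_qg ≤ 2^{1/p}·C_pg. -/
open Finset

noncomputable section

namespace GreedyQB

variable {𝕜 X : Type*} [RCLike 𝕜] [AddCommGroup X] [Module 𝕜 X]

variable (q : X → ℝ) (e : ℕ → X) (c : ℕ → X →ₗ[𝕜] 𝕜)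


/-- a `C_pg`-partially-greedy basis of a `p`-Banach space is
quasi-greedy with constant `C_qg ≤ 2^{1/p} C_pg`. -/
theorem stmt7 (p : ℝ) (hp : 0 < p) (hp1 : p ≤ 1)
    (hq : IsPNorm 𝕜 p q) (hb : IsBasis q e c)
    (Cpg : ℝ) (hpg : PartiallyGreedy q e c Cpg) :
    QuasiGreedy q e c ((2 : ℝ) ^ (1 / p) * Cpg) := by
  have hp' : p ≠ 0 := ne_of_gt hp
  -- q 0 = 0
  have hq0 : q 0 = 0 := by
    have := hq.hom (0 : 𝕜) 0
    simpa using this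
  -- q is nonnegative
  have hqnn : ∀ f : X, 0 ≤ q f := by
    intro f
    by_cases hf : f = 0
    · simp [hf, hq0]
    · exact le_of_lt (hq.pos f hf)
  -- q (-g) = q g
  have hqneg : ∀ g : X, q (-g) = q g := by
    intro g
    have := hq.hom (-1 : 𝕜) g
    simpa using this
  -- 1 ≤ Cpg
  have he0 : e 0 ≠ 0 := by
    intro h
    have := hb.biorth 0 0
    simp [h] at this
  have hCpg : 1 ≤ Cpg := by
    have h := hpg (e 0) ∅ (by intro n hn; simp at hn) 0 (by simp)
    simp only [proj, psum, Finset.range_zero, Finset.sum_empty, sub_zero] at h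
    have hpos := hq.pos (e 0) he0
    nlinarith
  have hCpg0 : 0 ≤ Cpg := le_trans zero_le_one hCpg
  intro f A hA
  -- partially greedy with k = 0
  have h1 : q (f - proj c e A f) ≤ Cpg * q f := by
    have h := hpg f A hA 0 (Nat.zero_le _)
    simpa [psum, proj] using h
  -- p-triangle
  have h2 : q (proj c e A f) ^ p ≤ q f ^ p + q (f - proj c e A f) ^ p := by
    have h := hq.ptri f (proj c e A f - f)
    have heq : f + (proj c e A f - f) = proj c e A f := by abel
    rw [heq] at h
    have : q (proj c e A f - f) = q (f - proj c e A f) := by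
      rw [← hqneg (proj c e A f - f)]
      simp [neg_sub]
    rwa [this] at h
  have hqfCpg : q f ≤ Cpg * q f := by nlinarith [hqnn f]
  have h3 : q f ^ p ≤ (Cpg * q f) ^ p :=
    Real.rpow_le_rpow (hqnn f) hqfCpg (le_of_lt hp)
  have h4 : q (f - proj c e A f) ^ p ≤ (Cpg * q f) ^ p :=
    Real.rpow_le_rpow (hqnn _) h1 (le_of_lt hp)
  have hD0 : (0 : ℝ) ≤ (2 : ℝ) ^ (1 / p) * Cpg * q f :=
    mul_nonneg (mul_nonneg (Real.rpow_nonneg (by norm_num) _) hCpg0) (hqnn f)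
  have hDp : ((2 : ℝ) ^ (1 / p) * Cpg * q f) ^ p = 2 * (Cpg * q f) ^ p := by
    rw [mul_assoc, Real.mul_rpow (Real.rpow_nonneg (by norm_num) _)
      (mul_nonneg hCpg0 (hqnn f)),
      ← Real.rpow_mul (by norm_num : (0:ℝ) ≤ 2), one_div,
      inv_mul_cancel₀ hp', Real.rpow_one]
  have hkey : q (proj c e A f) ^ p ≤ ((2 : ℝ) ^ (1 / p) * Cpg * q f) ^ p := by
    rw [hDp]
    calc q (proj c e A f) ^ p ≤ q f ^ p + q (f - proj c e A f) ^ p := h2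
      _ ≤ (Cpg * q f) ^ p + (Cpg * q f) ^ p := add_le_add h3 h4
      _ = 2 * (Cpg * q f) ^ p := by ring
  -- take p-th roots
  by_contra hcon
  push_neg at hcon
  rw [mul_assoc] at hcon
  have := Real.rpow_lt_rpow hD0 (by rw [← mul_assoc] at hcon; exact hcon) hp
  exact absurd hkey (not_le.mpr this)

end GreedyQB
end
end

section
/- Let B = (e_n) be a basis of a quasi-Banach space X that is partially-greedy with constant C_pg. Then B is partially-symmetric for largest coefficients with constant Δ_pl ≤ C_pg. -/
open Finset

noncomputable section

namespace GreedyQB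

variable {𝕜 X : Type*} [RCLike 𝕜] [AddCommGroup X] [Module 𝕜 X]

variable (q : X → ℝ) (e : ℕ → X) (c : ℕ → X →ₗ[𝕜] 𝕜)



lemma coeff_indSum {𝕜 X : Type*} [RCLike 𝕜] [AddCommGroup X] [Module 𝕜 X]
    (e : ℕ → X) (c : ℕ → X →ₗ[𝕜] 𝕜)
    (hbi : ∀ n m, c n (e m) = if n = m then (1 : 𝕜) else 0)
    (η : ℕ → 𝕜) (S : Finset ℕ) (n : ℕ) :
    c n (indSum e η S) = if n ∈ S then η n else 0 := by
  unfold indSum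
  rw [map_sum]
  simp only [map_smul, hbi, smul_eq_mul, mul_ite, mul_one, mul_zero]
  exact Finset.sum_ite_eq S n η

/-- a `C_pg`-partially-greedy basis is partially-symmetric for
largest coefficients with constant `Δ_pl ≤ C_pg`. -/
theorem stmt8 (hq : IsQuasiNorm 𝕜 q) (hb : IsBasis q e c)
    (Cpg : ℝ) (hpg : PartiallyGreedy q e c Cpg) :
    PSLC q e c Cpg := by
  intro A B ε ε' f hε hε' hcard hf1 hAf hABlt hB0
  classical
  set k : ℕ := if hA : A.Nonempty then A.max' hA + 1 else 0 with hk_def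
  have hAk : ∀ a ∈ A, a < k := by
    intro a ha
    have hA : A.Nonempty := ⟨a, ha⟩
    rw [hk_def, dif_pos hA]
    exact Nat.lt_succ_of_le (A.le_max' a ha)
  have hkf : ∀ n, c n f ≠ 0 → k ≤ n := by
    intro n hn
    rw [hk_def]
    split
    · next hA => exact Nat.succ_le_of_lt (hAf _ (A.max'_mem hA) n hn)
    · exact Nat.zero_le n
  have hkB : ∀ b ∈ B, k ≤ b := by
    intro b hb
    rw [hk_def]
    split
    · next hA => exact Nat.succ_le_of_lt (hABlt _ (A.max'_mem hA) b hb)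
    · exact Nat.zero_le b
  set D : Finset ℕ := Finset.range k \ A with hD_def
  set G : Finset ℕ := D ∪ B with hG_def
  set ε'' : ℕ → 𝕜 := fun n => if n ∈ B then ε' n else 1 with hε''_def
  set h : X := f + indSum e ε A + indSum e ε'' G with hh_def
  have hAsub : A ⊆ Finset.range k := fun a ha => Finset.mem_range.2 (hAk a ha)
  have hBA : ∀ b ∈ B, b ∉ A := fun b hb hbA => lt_irrefl b (hABlt b hbA b hb)
  have hDnotB : ∀ n ∈ D, n ∉ B := by
    intro n hn hnB
    have h1 : n < k := Finset.mem_range.1 (Finset.mem_sdiff.1 hn).1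
    exact absurd (hkB n hnB) (not_le.2 h1)
  have hDnotA : ∀ n ∈ D, n ∉ A := fun n hn => (Finset.mem_sdiff.1 hn).2
  have hfA : ∀ n ∈ A, c n f = 0 := by
    intro n hn
    by_contra hne
    exact lt_irrefl n (hAf n hn n hne)
  have hfD : ∀ n ∈ D, c n f = 0 := by
    intro n hn
    by_contra hne
    exact absurd (hkf n hne)
      (not_le.2 (Finset.mem_range.1 (Finset.mem_sdiff.1 hn).1))
  have hDB : Disjoint D B := Finset.disjoint_left.2 hDnotB
  have hch : ∀ n, c n h = c n f + (if n ∈ A then ε n else 0) +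
      (if n ∈ G then ε'' n else 0) := by
    intro n
    rw [hh_def, map_add, map_add, coeff_indSum e c hb.biorth,
      coeff_indSum e c hb.biorth]
  have hGcoef : ∀ n ∈ G, c n h = ε'' n := by
    intro n hn
    rcases Finset.mem_union.1 hn with hD | hB
    · rw [hch, hfD n hD, if_neg (hDnotA n hD), if_pos hn, zero_add, zero_add]
    · rw [hch, hB0 n hB, if_neg (hBA n hB), if_pos hn, zero_add, zero_add]
  have hGnorm : ∀ n ∈ G, ‖c n h‖ = 1 := by
    intro n hn
    rw [hGcoef n hn]
    simp only [hε''_def]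
    rcases Finset.mem_union.1 hn with hD | hB
    · rw [if_neg (hDnotB n hD)]; exact norm_one
    · rw [if_pos hB]; exact hε' n hB
  have hAcoef : ∀ n ∈ A, c n h = ε n := by
    intro n hn
    have hnG : n ∉ G := by
      intro hG
      rcases Finset.mem_union.1 hG with hD | hB
      · exact hDnotA n hD hn
      · exact hBA n hB hn
    rw [hch, hfA n hn, if_pos hn, if_neg hnG, zero_add, add_zero]
  have hGreedy : GreedySet c h G := by
    intro n hn m hm
    rw [hGnorm n hn]
    by_cases hmA : m ∈ A
    · rw [hAcoef m hmA]; exact le_of_eq (hε m hmA)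
    · rw [hch, if_neg hmA, if_neg hm, add_zero, add_zero]; exact hf1 m
  have hk_card : k ≤ G.card := by
    have h1 : G.card = D.card + B.card := Finset.card_union_of_disjoint hDB
    have h2 : D.card = k - A.card := by
      rw [hD_def, Finset.card_sdiff_of_subset hAsub, Finset.card_range]
    have h3 : A.card ≤ k := by
      have := Finset.card_le_card hAsub
      rwa [Finset.card_range] at this
    omega
  have hproj : proj c e G h = indSum e ε'' G :=
    Finset.sum_congr rfl fun n hn => by rw [hGcoef n hn]
  have hDcoef : ∀ n ∈ D, c n h = ε'' n := fun n hn =>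
    hGcoef n (Finset.mem_union_left _ hn)
  have e2 : psum c e k h = (∑ n ∈ D, ε'' n • e n) + indSum e ε A := by
    unfold psum proj indSum
    rw [← Finset.sum_sdiff hAsub, ← hD_def]
    congr 1
    · exact Finset.sum_congr rfl fun n hn => by rw [hDcoef n hn]
    · exact Finset.sum_congr rfl fun n hn => by rw [hAcoef n hn]
  have e3 : indSum e ε'' G = (∑ n ∈ D, ε'' n • e n) + indSum e ε' B := by
    rw [hG_def]
    unfold indSum
    rw [Finset.sum_union hDB]
    congr 1
    exact Finset.sum_congr rfl fun n hn => by
      simp only [hε''_def, if_pos hn]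
  have key := hpg h G hGreedy k hk_card
  have eqA : h - proj c e G h = f + indSum e ε A := by
    rw [hproj, hh_def]; abel
  have eqB : h - psum c e k h = f + indSum e ε' B := by
    rw [e2, hh_def, e3]; abel
  rwa [eqA, eqB] at key


end GreedyQB
end
end

section
/- Let B = (e_n) be a basis of a p-Banach space X (0 < p ≤ 1) that is partially-symmetric for largest coefficients with constant Δ_pl and whose truncation operator is uniformly bounded with constant Γ_t < ∞. Then B is partially-greedy with constant C_pg ≤ A_p·Δ_pl·Γ_t, where A_p = (2^p − 1)^{−1/p}. -/
open Finset

noncomputable section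

namespace GreedyQB

variable {𝕜 X : Type*} [RCLike 𝕜] [AddCommGroup X] [Module 𝕜 X]

variable (q : X → ℝ) (e : ℕ → X) (c : ℕ → X →ₗ[𝕜] 𝕜)


/-! ### Auxiliary lemmas -/

section Aux

open Pointwise

variable {q' : X → ℝ} {e' : ℕ → X} {c' : ℕ → X →ₗ[𝕜] 𝕜} {p : ℝ}

lemma IsPNorm.q_zero (hq : IsPNorm 𝕜 p q') : q' 0 = 0 := by
  have := hq.hom (0 : 𝕜) 0
  simpa using this

lemma IsPNorm.nonneg (hq : IsPNorm 𝕜 p q') (f : X) : 0 ≤ q' f := by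
  rcases eq_or_ne f 0 with rfl | h
  · exact le_of_eq (hq.q_zero).symm
  · exact (hq.pos f h).le

lemma IsPNorm.rpow_sum_le (hq : IsPNorm 𝕜 p q') (hp : 0 < p) {ι : Type*} (s : Finset ι)
    (x : ι → X) : q' (∑ i ∈ s, x i) ^ p ≤ ∑ i ∈ s, q' (x i) ^ p := by
  classical
  induction s using Finset.cons_induction with
  | empty => simp [hq.q_zero, Real.zero_rpow hp.ne']
  | cons a s ha ih =>
      rw [Finset.sum_cons, Finset.sum_cons]
      exact (hq.ptri _ _).trans (add_le_add_right ih _)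

lemma coeff_proj (hb : IsBasis q' e' c') (A : Finset ℕ) (f : X) (m : ℕ) :
    c' m (proj c' e' A f) = if m ∈ A then c' m f else 0 := by
  classical
  simp only [proj, map_sum, map_smul, hb.biorth, smul_eq_mul, mul_ite, mul_one, mul_zero]
  rw [Finset.sum_ite_eq A m (fun n => c' n f)]

lemma norm_sgn (z : 𝕜) : ‖sgn 𝕜 z‖ = 1 := by
  unfold sgn
  split_ifs with h
  · simp
  · rw [norm_mul, norm_inv, RCLike.norm_ofReal, abs_of_nonneg (norm_nonneg z),
      inv_mul_cancel₀ (norm_ne_zero_iff.mpr h)]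

lemma sgn_mul_norm (z : 𝕜) : sgn 𝕜 z * (‖z‖ : 𝕜) = z := by
  unfold sgn
  split_ifs with h
  · simp [h]
  · have hz : ((‖z‖ : ℝ) : 𝕜) ≠ 0 := by
      simpa using norm_ne_zero_iff.mpr h
    field_simp

lemma sgn_real_smul {t : ℝ} (ht : 0 < t) (z : 𝕜) : sgn 𝕜 ((t : 𝕜) * z) = sgn 𝕜 z := by
  rcases eq_or_ne z 0 with rfl | hz
  · simp
  · have htz : (t : 𝕜) * z ≠ 0 := by
      apply mul_ne_zero _ hz
      simpa using ht.ne'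
    unfold sgn
    rw [if_neg htz, if_neg hz, norm_mul, RCLike.norm_ofReal, abs_of_pos ht]
    have ht0 : ((t : ℝ) : 𝕜) ≠ 0 := by simpa using ht.ne'
    have h2 : ((‖z‖ : ℝ) : 𝕜) ≠ 0 := by simpa using norm_ne_zero_iff.mpr hz
    push_cast
    field_simp

lemma minCoeff_smul (c' : ℕ → X →ₗ[𝕜] 𝕜) (f : X) (B : Finset ℕ) {t : ℝ} (ht : 0 ≤ t) :
    minCoeff c' ((t : 𝕜) • f) B = t * minCoeff c' f B := by
  unfold minCoeff
  have himg : (fun n => ‖c' n ((t : 𝕜) • f)‖) '' (B : Set ℕ)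
      = (fun y => t * y) '' ((fun n => ‖c' n f‖) '' (B : Set ℕ)) := by
    rw [Set.image_image]
    apply Set.image_congr'
    intro n
    rw [map_smul, smul_eq_mul, norm_mul, RCLike.norm_ofReal, abs_of_nonneg ht]
  rw [himg]
  have : (fun y => t * y) '' ((fun n => ‖c' n f‖) '' (B : Set ℕ))
      = t • ((fun n => ‖c' n f‖) '' (B : Set ℕ)) := by
    rw [← Set.image_smul]
    simp [smul_eq_mul]
  rw [this, Real.sInf_smul_of_nonneg ht, smul_eq_mul]

lemma proj_smul (c' : ℕ → X →ₗ[𝕜] 𝕜) (e' : ℕ → X) (A : Finset ℕ) (t : 𝕜) (f : X) :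
    proj c' e' A (t • f) = t • proj c' e' A f := by
  unfold proj
  rw [Finset.smul_sum]
  exact Finset.sum_congr rfl fun n _ => by rw [map_smul, smul_eq_mul, mul_smul]

/-- Scaling of the truncation operator by a positive real. -/
lemma trunc_smul (c' : ℕ → X →ₗ[𝕜] 𝕜) (e' : ℕ → X) (f : X) (B : Finset ℕ) {t : ℝ}
    (ht : 0 < t) : trunc e' c' ((t : 𝕜) • f) B = (t : 𝕜) • trunc e' c' f B := by
  unfold trunc restrTrunc
  rw [minCoeff_smul c' f B ht.le]
  have hsgn : ∀ n, sgn 𝕜 (c' n ((t : 𝕜) • f)) = sgn 𝕜 (c' n f) := by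
    intro n
    rw [map_smul, smul_eq_mul]
    exact sgn_real_smul ht _
  have h1 : (∑ n ∈ B, sgn 𝕜 (c' n ((t : 𝕜) • f)) • e' n)
      = ∑ n ∈ B, sgn 𝕜 (c' n f) • e' n :=
    Finset.sum_congr rfl fun n _ => by rw [hsgn n]
  rw [h1, proj_smul, smul_add, smul_sub, smul_smul]
  push_cast
  ring_nf

/-- The geometric/convexity induction: binary decomposition bound in a `p`-Banach space. -/
lemma convexity_bound (hq : IsPNorm 𝕜 p q') (hp : 0 < p)
    (g : X) (D : Finset ℕ) (w : ℕ → X) (M : ℝ)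
    (hM : ∀ D' ⊆ D, q' (g + ∑ n ∈ D', w n) ≤ M) :
    ∀ (N : ℕ) (v : ℕ → ℝ), (∀ n ∈ D, 0 ≤ v n ∧ v n ≤ 1) →
      q' (g + ∑ n ∈ D, ((v n : ℝ) : 𝕜) • w n) ^ p ≤
        (∑ j ∈ Finset.range N, ((2 : ℝ) ^ (-p)) ^ (j + 1)) * M ^ p +
          ((2 : ℝ) ^ (-p)) ^ N * (q' g ^ p + ∑ n ∈ D, q' (w n) ^ p) := by
  classical
  have hM0 : 0 ≤ M := le_trans (hq.nonneg _) (by simpa using hM ∅ (Finset.empty_subset D))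
  set x : ℝ := (2 : ℝ) ^ (-p) with hxdef
  have hx0 : 0 < x := Real.rpow_pos_of_pos (by norm_num) _
  have hhalf : ((2 : ℝ)⁻¹) ^ p = x := by
    rw [hxdef, Real.rpow_neg (by norm_num : (0:ℝ) ≤ 2), ← Real.inv_rpow (by norm_num : (0:ℝ) ≤ 2)]
  intro N
  induction N with
  | zero =>
      intro v hv
      simp only [Finset.range_zero, Finset.sum_empty, zero_mul, pow_zero, one_mul, zero_add]
      calc q' (g + ∑ n ∈ D, ((v n : ℝ) : 𝕜) • w n) ^ p
          ≤ q' g ^ p + q' (∑ n ∈ D, ((v n : ℝ) : 𝕜) • w n) ^ p := hq.ptri _ _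
        _ ≤ q' g ^ p + ∑ n ∈ D, q' (((v n : ℝ) : 𝕜) • w n) ^ p :=
            add_le_add_right (hq.rpow_sum_le hp _ _) _
        _ ≤ q' g ^ p + ∑ n ∈ D, q' (w n) ^ p := by
            refine add_le_add_right (Finset.sum_le_sum fun n hn => ?_) _
            rw [hq.hom, RCLike.norm_ofReal, abs_of_nonneg (hv n hn).1]
            refine Real.rpow_le_rpow (mul_nonneg (hv n hn).1 (hq.nonneg _)) ?_ hp.le
            calc v n * q' (w n) ≤ 1 * q' (w n) :=
                  mul_le_mul_of_nonneg_right (hv n hn).2 (hq.nonneg _)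
              _ = q' (w n) := one_mul _
  | succ N ih =>
      intro v hv
      set D₁ : Finset ℕ := D.filter (fun n => (2 : ℝ)⁻¹ ≤ v n) with hD₁
      set v' : ℕ → ℝ := fun n => 2 * v n - (if (2 : ℝ)⁻¹ ≤ v n then 1 else 0) with hv'def
      have hv' : ∀ n ∈ D, 0 ≤ v' n ∧ v' n ≤ 1 := by
        intro n hn
        have := hv n hn
        simp only [hv'def]
        split_ifs with h
        · constructor <;> [linarith; linarith]
        · push_neg at h
          constructor <;> [linarith; linarith]
      have hid : g + ∑ n ∈ D, ((v n : ℝ) : 𝕜) • w n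
          = ((2⁻¹ : ℝ) : 𝕜) • (g + ∑ n ∈ D₁, w n)
            + ((2⁻¹ : ℝ) : 𝕜) • (g + ∑ n ∈ D, ((v' n : ℝ) : 𝕜) • w n) := by
        rw [smul_add, smul_add, add_add_add_comm]
        have hg2 : ((2⁻¹ : ℝ) : 𝕜) • g + ((2⁻¹ : ℝ) : 𝕜) • g = g := by
          have h21 : ((2⁻¹ : ℝ) : 𝕜) + ((2⁻¹ : ℝ) : 𝕜) = 1 := by
            push_cast
            norm_num
          rw [← add_smul, h21, one_smul]
        rw [hg2, hD₁, Finset.sum_filter, Finset.smul_sum, Finset.smul_sum,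
          ← Finset.sum_add_distrib]
        congr 1
        refine Finset.sum_congr rfl fun n hn => ?_
        simp only [hv'def]
        split_ifs with h
        · simp only [smul_smul]
          rw [← add_smul]
          congr 1
          push_cast
          ring
        · simp only [smul_zero, zero_add, smul_smul]
          congr 1
          push_cast
          ring
      have hq1 : q' (((2⁻¹ : ℝ) : 𝕜) • (g + ∑ n ∈ D₁, w n)) ^ p
          ≤ x * M ^ p := by
        rw [hq.hom, RCLike.norm_ofReal, abs_of_nonneg (by norm_num : (0:ℝ) ≤ 2⁻¹),
          Real.mul_rpow (by norm_num) (hq.nonneg _), hhalf]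
        exact mul_le_mul_of_nonneg_left
          (Real.rpow_le_rpow (hq.nonneg _) (hM D₁ (Finset.filter_subset _ _)) hp.le) hx0.le
      have hq2 : q' (((2⁻¹ : ℝ) : 𝕜) • (g + ∑ n ∈ D, ((v' n : ℝ) : 𝕜) • w n)) ^ p
          ≤ x * ((∑ j ∈ Finset.range N, x ^ (j + 1)) * M ^ p
              + x ^ N * (q' g ^ p + ∑ n ∈ D, q' (w n) ^ p)) := by
        rw [hq.hom, RCLike.norm_ofReal, abs_of_nonneg (by norm_num : (0:ℝ) ≤ 2⁻¹),
          Real.mul_rpow (by norm_num) (hq.nonneg _), hhalf]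
        exact mul_le_mul_of_nonneg_left (ih v' hv') hx0.le
      calc q' (g + ∑ n ∈ D, ((v n : ℝ) : 𝕜) • w n) ^ p
          ≤ q' (((2⁻¹ : ℝ) : 𝕜) • (g + ∑ n ∈ D₁, w n)) ^ p
            + q' (((2⁻¹ : ℝ) : 𝕜) • (g + ∑ n ∈ D, ((v' n : ℝ) : 𝕜) • w n)) ^ p := by
            rw [hid]; exact hq.ptri _ _
        _ ≤ x * M ^ p + x * ((∑ j ∈ Finset.range N, x ^ (j + 1)) * M ^ p
              + x ^ N * (q' g ^ p + ∑ n ∈ D, q' (w n) ^ p)) := add_le_add hq1 hq2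
        _ = (∑ j ∈ Finset.range (N + 1), x ^ (j + 1)) * M ^ p
              + x ^ (N + 1) * (q' g ^ p + ∑ n ∈ D, q' (w n) ^ p) := by
            have hrec : (∑ j ∈ Finset.range (N + 1), x ^ (j + 1))
                = x * (∑ j ∈ Finset.range N, x ^ (j + 1)) + x := by
              rw [Finset.sum_range_succ']
              rw [Finset.mul_sum]
              congr 1
              · exact Finset.sum_congr rfl fun j _ => by ring
              · exact pow_one x
            rw [hrec]
            ring

/-- The geometric sum is bounded by `Ap p ^ p`. -/
lemma geom_sum_le_Ap (hp : 0 < p) (N : ℕ) :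
    (∑ j ∈ Finset.range N, ((2 : ℝ) ^ (-p)) ^ (j + 1)) ≤ Ap p ^ p := by
  set x : ℝ := (2 : ℝ) ^ (-p) with hxdef
  have h2p : (1 : ℝ) < 2 ^ p :=
    (Real.one_lt_rpow_iff_of_pos (by norm_num)).mpr (Or.inl ⟨by norm_num, hp⟩)
  have h2p0 : (0 : ℝ) < 2 ^ p := lt_trans one_pos h2p
  have hx0 : 0 < x := Real.rpow_pos_of_pos (by norm_num) _
  have hxval : x = ((2 : ℝ) ^ p)⁻¹ := by
    rw [hxdef, Real.rpow_neg (by norm_num : (0:ℝ) ≤ 2)]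
  have hx1 : x < 1 := by
    rw [hxval]
    exact inv_lt_one_of_one_lt₀ h2p
  have hAp : Ap p ^ p = ((2 : ℝ) ^ p - 1)⁻¹ := by
    unfold Ap
    rw [← Real.rpow_mul (by linarith : (0:ℝ) ≤ 2 ^ p - 1)]
    rw [show (-1 / p) * p = -1 by field_simp]
    exact Real.rpow_neg_one _
  have hsum : (∑ j ∈ Finset.range N, x ^ (j + 1)) = x * ∑ j ∈ Finset.range N, x ^ j := by
    rw [Finset.mul_sum]
    exact Finset.sum_congr rfl fun j _ => by ring
  have h1x : 0 < 1 - x := by linarith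
  have hgeom : (∑ j ∈ Finset.range N, x ^ j) ≤ (1 - x)⁻¹ := by
    rw [geom_sum_eq hx1.ne N,
      show (x ^ N - 1) / (x - 1) = (1 - x ^ N) / (1 - x) by
        rw [← neg_div_neg_eq]; ring_nf,
      inv_eq_one_div, div_le_div_iff₀ h1x h1x]
    nlinarith [pow_nonneg hx0.le N]
  calc (∑ j ∈ Finset.range N, x ^ (j + 1)) = x * ∑ j ∈ Finset.range N, x ^ j := hsum
    _ ≤ x * (1 - x)⁻¹ := mul_le_mul_of_nonneg_left hgeom hx0.le
    _ = Ap p ^ p := by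
        rw [hAp, hxval]
        have hu0 : ((2 : ℝ) ^ p) ≠ 0 := h2p0.ne'
        have hu1 : ((2 : ℝ) ^ p) - 1 ≠ 0 := by linarith
        field_simp

end Aux

/-- partial symmetry for largest coefficients plus a uniformly bounded
truncation operator implies partial greediness with `C_pg ≤ A_p Δ_pl Γ_t`. -/
theorem stmt9 (p : ℝ) (hp : 0 < p) (hp1 : p ≤ 1)
    (hq : IsPNorm 𝕜 p q) (hb : IsBasis q e c)
    (Δpl Γt : ℝ) (hΔ : PSLC q e c Δpl)
    (hΓ : ∀ (f : X) (A : Finset ℕ), GreedySet c f A → q f ≤ 1 →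
      q (trunc e c f A) ≤ Γt) :
    PartiallyGreedy q e c (Ap p * Δpl * Γt) := by
  classical
  -- `e 0 ≠ 0`
  have he0 : e 0 ≠ 0 := by
    intro h0
    have h1 := hb.biorth 0 0
    rw [h0, map_zero] at h1
    simp at h1
  have hqe0 : 0 < q (e 0) := hq.pos _ he0
  -- the three constants are at least one
  have hΔ1 : 1 ≤ Δpl := by
    have h := hΔ ∅ ∅ (fun _ => 1) (fun _ => 1) (e 0) (fun n hn => by simp at hn)
      (fun n hn => by simp at hn) le_rfl
      (fun n => by rw [hb.biorth]; split_ifs <;> simp)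
      (fun a ha => by simp at ha) (fun a ha => by simp at ha)
      (fun b hb' => by simp at hb')
    simp only [indSum, Finset.sum_empty, add_zero] at h
    nlinarith
  have hΓ1 : 1 ≤ Γt := by
    set f₀ : X := (((q (e 0))⁻¹ : ℝ) : 𝕜) • e 0 with hf₀
    have hqf₀ : q f₀ = 1 := by
      rw [hf₀, hq.hom, RCLike.norm_ofReal, abs_of_pos (inv_pos.mpr hqe0),
        inv_mul_cancel₀ hqe0.ne']
    have hg : GreedySet c f₀ ∅ := fun n hn => by simp at hn
    have h1 := hΓ f₀ ∅ hg (le_of_eq hqf₀)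
    have htr : trunc e c f₀ ∅ = f₀ := by
      unfold trunc restrTrunc proj
      simp
    rw [htr, hqf₀] at h1
    exact h1
  have hAp1 : 1 ≤ Ap p := by
    have h2p : (1:ℝ) < 2 ^ p :=
      (Real.one_lt_rpow_iff_of_pos (by norm_num)).mpr (Or.inl ⟨by norm_num, hp⟩)
    have h2p2 : (2:ℝ) ^ p ≤ 2 := by
      calc (2:ℝ) ^ p ≤ 2 ^ (1:ℝ) := Real.rpow_le_rpow_of_exponent_le (by norm_num) hp1
        _ = 2 := Real.rpow_one 2
    have hexp : -1 / p ≤ 0 := by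
      have : 0 ≤ 1 / p := by positivity
      rw [neg_div]
      linarith
    exact Real.one_le_rpow_of_pos_of_le_one_of_nonpos (by linarith) (by linarith) hexp
  have hAΔ : 1 ≤ Ap p * Δpl := by nlinarith
  have hC1 : 1 ≤ Ap p * Δpl * Γt := by nlinarith
  intro f A hA k hk
  show q (f - proj c e A f) ≤ Ap p * Δpl * Γt * q (f - proj c e (Finset.range k) f)
  set R : Finset ℕ := Finset.range k with hR
  set h : X := f - proj c e R f with hh
  have hRcard : R.card = k := Finset.card_range k
  have ch : ∀ n, c n h = if n ∈ R then 0 else c n f := by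
    intro n
    rw [hh, map_sub, coeff_proj hb]
    split_ifs <;> simp
  set B : Finset ℕ := A \ R with hB
  set D : Finset ℕ := R \ A with hD
  have hBA : ∀ n ∈ B, n ∈ A := fun n hn => (Finset.mem_sdiff.mp hn).1
  have hBR : ∀ n ∈ B, n ∉ R := fun n hn => (Finset.mem_sdiff.mp hn).2
  have hchB : ∀ n ∈ B, c n h = c n f := fun n hn => by rw [ch n, if_neg (hBR n hn)]
  by_cases hBne : B.Nonempty
  swap
  · -- degenerate case: `A = range k`
    rw [Finset.not_nonempty_iff_eq_empty] at hBne
    have hAR : A = R := Finset.eq_of_subset_of_card_le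
      (by rwa [← Finset.sdiff_eq_empty_iff_subset]) (by rw [hRcard]; exact hk)
    rw [hAR]
    calc q (f - proj c e R f) = 1 * q (f - proj c e R f) := (one_mul _).symm
      _ ≤ Ap p * Δpl * Γt * q (f - proj c e R f) :=
          mul_le_mul_of_nonneg_right hC1 (hq.nonneg _)
  set s : ℝ := minCoeff c h B with hs
  have hsInf : s = sInf ((fun n => ‖c n h‖) '' (B : Set ℕ)) := hs
  have hBfin : ((fun n => ‖c n h‖) '' (B : Set ℕ)).Finite := B.finite_toSet.image _
  have hBimne : ((fun n => ‖c n h‖) '' (B : Set ℕ)).Nonempty := by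
    obtain ⟨b, hb'⟩ := hBne
    exact ⟨_, ⟨b, Finset.mem_coe.mpr hb', rfl⟩⟩
  obtain ⟨b₀, hb₀B, hb₀⟩ : ∃ b ∈ B, ‖c b h‖ = s := by
    have h1 := Set.Nonempty.csInf_mem hBimne hBfin
    rw [← hsInf] at h1
    obtain ⟨b, hbmem, hbeq⟩ := h1
    exact ⟨b, Finset.mem_coe.mp hbmem, hbeq⟩
  have hslb : ∀ n ∈ B, s ≤ ‖c n h‖ := by
    intro n hn
    rw [hsInf]
    exact csInf_le hBfin.bddBelow ⟨n, Finset.mem_coe.mpr hn, rfl⟩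
  have hs0 : 0 ≤ s := hb₀ ▸ norm_nonneg (c b₀ h)
  by_cases hspos : 0 < s
  swap
  · -- degenerate case: all coefficients outside `A` vanish
    have hs0' : s = 0 := le_antisymm (not_lt.mp hspos) hs0
    have hout : ∀ m, m ∉ A → c m f = 0 := by
      intro m hm
      have h1 : ‖c m f‖ ≤ ‖c b₀ f‖ := hA b₀ (hBA b₀ hb₀B) m hm
      have h2 : ‖c b₀ f‖ = s := by rw [← hchB b₀ hb₀B, hb₀]
      rw [h2, hs0'] at h1
      exact norm_eq_zero.mp (le_antisymm h1 (norm_nonneg _))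
    have hzero : f - proj c e A f = 0 := by
      apply hb.total
      intro n
      rw [map_sub, coeff_proj hb]
      split_ifs with hn
      · ring
      · rw [hout n hn, sub_zero]
    rw [hzero, hq.q_zero]
    exact mul_nonneg (by linarith) (hq.nonneg _)
  -- main case
  set g : X := h - proj c e B h with hgdef
  have cg : ∀ n, c n g = if n ∈ R ∨ n ∈ B then 0 else c n f := by
    intro n
    rw [hgdef, map_sub, coeff_proj hb, ch n]
    by_cases hnR : n ∈ R <;> by_cases hnB : n ∈ B <;> simp [hnR, hnB]
  have hnA_le : ∀ m, m ∉ A → ‖c m f‖ ≤ s := by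
    intro m hm
    rw [hsInf]
    apply le_csInf hBimne
    rintro y ⟨n, hn, rfl⟩
    have hn' : n ∈ B := Finset.mem_coe.mp hn
    calc ‖c m f‖ ≤ ‖c n f‖ := hA n (hBA n hn') m hm
      _ = ‖c n h‖ := by rw [hchB n hn']
  have hgb : ∀ n, ‖c n g‖ ≤ s := by
    intro n
    rw [cg n]
    split_ifs with hcase
    · simpa using hs0
    · push_neg at hcase
      apply hnA_le
      intro hnA
      exact hcase.2 (Finset.mem_sdiff.mpr ⟨hnA, hcase.1⟩)
  -- the algebraic identity `f - P_A f = g + P_D f`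
  have hPBh : proj c e B h = proj c e B f :=
    Finset.sum_congr rfl fun n hn => by rw [hchB n hn]
  have hsplitR : proj c e D f + proj c e (R ∩ A) f = proj c e R f := by
    show (∑ n ∈ R \ A, c n f • e n) + ∑ n ∈ R ∩ A, c n f • e n = ∑ n ∈ R, c n f • e n
    rw [← Finset.sum_union (Finset.disjoint_sdiff_inter R A), Finset.sdiff_union_inter R A]
  have hsplitA : proj c e B f + proj c e (A ∩ R) f = proj c e A f := by
    show (∑ n ∈ A \ R, c n f • e n) + ∑ n ∈ A ∩ R, c n f • e n = ∑ n ∈ A, c n f • e n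
    rw [← Finset.sum_union (Finset.disjoint_sdiff_inter A R), Finset.sdiff_union_inter A R]
  have hinterRA : proj c e (R ∩ A) f = proj c e (A ∩ R) f := by rw [Finset.inter_comm]
  have key : f - proj c e A f = g + proj c e D f := by
    rw [hgdef, hPBh, hh, ← hsplitA, ← hsplitR, hinterRA]
    abel
  -- `B` is a greedy set for `h`
  have hGB : GreedySet c h B := by
    intro n hn m hm
    rw [ch m]
    split_ifs with hmR
    · rw [norm_zero]; exact norm_nonneg _
    · have hmA : m ∉ A := fun hmA => hm (Finset.mem_sdiff.mpr ⟨hmA, hmR⟩)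
      have h1 : ‖c m f‖ ≤ s := hnA_le m hmA
      exact h1.trans (hslb n hn)
  -- bound on the truncation of `h`
  have hh0 : h ≠ 0 := by
    intro h0
    rw [h0] at hb₀
    simp at hb₀
    linarith
  have hqh : 0 < q h := hq.pos h hh0
  set t : ℝ := (q h)⁻¹ with htdef
  have ht : 0 < t := inv_pos.mpr hqh
  have hGB' : GreedySet c ((t : 𝕜) • h) B := by
    intro n hn m hm
    rw [map_smul, map_smul, smul_eq_mul, smul_eq_mul, norm_mul, norm_mul]
    exact mul_le_mul_of_nonneg_left (hGB n hn m hm) (norm_nonneg _)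
  have hq1 : q ((t : 𝕜) • h) ≤ 1 := by
    rw [hq.hom, RCLike.norm_ofReal, abs_of_pos ht, htdef, inv_mul_cancel₀ hqh.ne']
  have htrb : q (trunc e c h B) ≤ Γt * q h := by
    have h1 := hΓ ((t : 𝕜) • h) B hGB' hq1
    rw [trunc_smul c e h B ht, hq.hom, RCLike.norm_ofReal, abs_of_pos ht] at h1
    calc q (trunc e c h B) = q h * (t * q (trunc e c h B)) := by
          rw [htdef, ← mul_assoc, mul_inv_cancel₀ hqh.ne', one_mul]
      _ ≤ q h * Γt := mul_le_mul_of_nonneg_left h1 hqh.le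
      _ = Γt * q h := mul_comm _ _
  -- signs
  set θ : ℕ → 𝕜 := fun n => sgn 𝕜 (c n f) with hθ
  set ε' : ℕ → 𝕜 := fun n => sgn 𝕜 (c n h) with hε'
  set M : ℝ := Δpl * q (trunc e c h B) with hM
  have hΔ0 : (0:ℝ) ≤ Δpl := by linarith
  have htr : trunc e c h B = g + ((s : ℝ) : 𝕜) • indSum e ε' B := by
    rw [add_comm]
    rfl
  have hsinvmul : ((s : ℝ) : 𝕜) • (((s⁻¹ : ℝ) : 𝕜) • g) = g := by
    rw [smul_smul, ← RCLike.ofReal_mul, mul_inv_cancel₀ hspos.ne', RCLike.ofReal_one, one_smul]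
  have hDk : ∀ a ∈ D, a < k := fun a ha =>
    Finset.mem_range.mp (Finset.mem_sdiff.mp ha).1
  have hkB : ∀ b ∈ B, k ≤ b := fun b hbm =>
    not_lt.mp (fun hlt => hBR b hbm (Finset.mem_range.mpr hlt))
  have hDBcard : D.card ≤ B.card := by
    have e1 := Finset.card_sdiff_add_card_inter R A
    have e2 := Finset.card_sdiff_add_card_inter A R
    have e3 : (R ∩ A).card = (A ∩ R).card := by rw [Finset.inter_comm]
    rw [hRcard] at e1
    show (R \ A).card ≤ (A \ R).card
    omega
  -- the PSLC step
  have hstep : ∀ D' ⊆ D, q (g + ((s : ℝ) : 𝕜) • indSum e θ D') ≤ M := by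
    intro D' hD'
    set f₁ : X := ((s⁻¹ : ℝ) : 𝕜) • g with hf₁
    have hcf₁ : ∀ n, c n f₁ = ((s⁻¹ : ℝ) : 𝕜) * c n g := fun n => by
      rw [hf₁, map_smul, smul_eq_mul]
    have hP := hΔ D' B θ ε' f₁
      (fun n _ => norm_sgn _) (fun n _ => norm_sgn _)
      ((Finset.card_le_card hD').trans hDBcard)
      (fun n => by
        rw [hcf₁ n, norm_mul, RCLike.norm_ofReal, abs_of_pos (inv_pos.mpr hspos)]
        calc s⁻¹ * ‖c n g‖ ≤ s⁻¹ * s :=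
              mul_le_mul_of_nonneg_left (hgb n) (inv_pos.mpr hspos).le
          _ = 1 := inv_mul_cancel₀ hspos.ne')
      (fun a ha n hcn => by
        have hak : a < k := hDk a (hD' ha)
        have hg0 : c n g ≠ 0 := by
          intro h0
          exact hcn (by rw [hcf₁ n, h0, mul_zero])
        rw [cg n] at hg0
        by_cases hnR : n ∈ R
        · simp [hnR] at hg0
        · exact lt_of_lt_of_le hak (not_lt.mp (fun hlt => hnR (Finset.mem_range.mpr hlt))))
      (fun a ha b hbm => lt_of_lt_of_le (hDk a (hD' ha)) (hkB b hbm))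
      (fun b hbm => by rw [hcf₁ b, cg b, if_pos (Or.inr hbm), mul_zero])
    have hsc : ∀ z : X, q (g + ((s : ℝ) : 𝕜) • z) = s * q (f₁ + z) := by
      intro z
      have hz : g + ((s : ℝ) : 𝕜) • z = ((s : ℝ) : 𝕜) • (f₁ + z) := by
        rw [smul_add, hf₁, hsinvmul]
      rw [hz, hq.hom, RCLike.norm_ofReal, abs_of_pos hspos]
    calc q (g + ((s : ℝ) : 𝕜) • indSum e θ D') = s * q (f₁ + indSum e θ D') := hsc _
      _ ≤ s * (Δpl * q (f₁ + indSum e ε' B)) := mul_le_mul_of_nonneg_left hP hspos.le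
      _ = Δpl * (s * q (f₁ + indSum e ε' B)) := by ring
      _ = Δpl * q (g + ((s : ℝ) : 𝕜) • indSum e ε' B) := by rw [hsc]
      _ = M := by rw [hM, htr]
  -- convexity bound
  set w : ℕ → X := fun n => ((s : ℝ) : 𝕜) • (θ n • e n) with hw
  have hMw : ∀ D' ⊆ D, q (g + ∑ n ∈ D', w n) ≤ M := by
    intro D' hD'
    have hsum : ∑ n ∈ D', w n = ((s : ℝ) : 𝕜) • indSum e θ D' := by
      rw [indSum, Finset.smul_sum]
    rw [hsum]
    exact hstep D' hD'
  set v : ℕ → ℝ := fun n => ‖c n f‖ / s with hv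
  have hvI : ∀ n ∈ D, 0 ≤ v n ∧ v n ≤ 1 := by
    intro n hn
    have hnA : n ∉ A := (Finset.mem_sdiff.mp hn).2
    refine ⟨div_nonneg (norm_nonneg _) hs0, ?_⟩
    rw [hv]
    simp only []
    exact (div_le_one hspos).mpr (hnA_le n hnA)
  have hproj : ∑ n ∈ D, ((v n : ℝ) : 𝕜) • w n = proj c e D f := by
    refine Finset.sum_congr rfl fun n hn => ?_
    rw [hw, hv]
    simp only []
    rw [smul_smul, smul_smul]
    congr 1
    rw [← RCLike.ofReal_mul, div_mul_cancel₀ _ hspos.ne', mul_comm]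
    exact sgn_mul_norm (c n f)
  have hbound : ∀ N : ℕ, q (g + proj c e D f) ^ p ≤
      (∑ j ∈ Finset.range N, ((2:ℝ) ^ (-p)) ^ (j + 1)) * M ^ p
        + ((2:ℝ) ^ (-p)) ^ N * (q g ^ p + ∑ n ∈ D, q (w n) ^ p) := by
    intro N
    rw [← hproj]
    exact convexity_bound hq hp g D w M hMw N v hvI
  have hMnn : 0 ≤ M :=
    le_trans (hq.nonneg _) (by simpa using hMw ∅ (Finset.empty_subset D))
  have hfinal : q (g + proj c e D f) ^ p ≤ Ap p ^ p * M ^ p := by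
    set C₀ : ℝ := q g ^ p + ∑ n ∈ D, q (w n) ^ p with hC₀
    have hx1 : (2:ℝ) ^ (-p) < 1 := by
      rw [Real.rpow_neg (by norm_num : (0:ℝ) ≤ 2)]
      exact inv_lt_one_of_one_lt₀
        ((Real.one_lt_rpow_iff_of_pos (by norm_num)).mpr (Or.inl ⟨by norm_num, hp⟩))
    have hx0 : (0:ℝ) ≤ (2:ℝ) ^ (-p) := (Real.rpow_pos_of_pos (by norm_num) _).le
    have htend : Filter.Tendsto
        (fun N : ℕ => Ap p ^ p * M ^ p + ((2:ℝ) ^ (-p)) ^ N * C₀)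
        Filter.atTop (nhds (Ap p ^ p * M ^ p)) := by
      have h0 := tendsto_pow_atTop_nhds_zero_of_lt_one hx0 hx1
      have h1 := (h0.mul_const C₀).const_add (Ap p ^ p * M ^ p)
      simpa using h1
    refine ge_of_tendsto htend (Filter.Eventually.of_forall fun N => ?_)
    calc q (g + proj c e D f) ^ p ≤ _ := hbound N
      _ ≤ Ap p ^ p * M ^ p + ((2:ℝ) ^ (-p)) ^ N * C₀ := by
          apply add_le_add_left
          exact mul_le_mul_of_nonneg_right (geom_sum_le_Ap hp N)
            (Real.rpow_nonneg hMnn _)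
  have hΓ0 : (0:ℝ) ≤ Γt := by linarith
  have hApnn : (0:ℝ) ≤ Ap p := by linarith
  have hfin2 : q (f - proj c e A f) ^ p ≤ (Ap p * Δpl * Γt * q h) ^ p := by
    rw [key]
    refine hfinal.trans ?_
    have h1 : M ≤ Δpl * (Γt * q h) := by
      rw [hM]
      exact mul_le_mul_of_nonneg_left htrb hΔ0
    calc Ap p ^ p * M ^ p ≤ Ap p ^ p * (Δpl * (Γt * q h)) ^ p := by
          apply mul_le_mul_of_nonneg_left _ (Real.rpow_nonneg hApnn p)
          exact Real.rpow_le_rpow hMnn h1 hp.le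
      _ = (Ap p * (Δpl * (Γt * q h))) ^ p :=
          (Real.mul_rpow hApnn (mul_nonneg hΔ0 (mul_nonneg hΓ0 hqh.le))).symm
      _ = (Ap p * Δpl * Γt * q h) ^ p := by ring_nf
  by_contra hcon
  push_neg at hcon
  have hT : 0 ≤ Ap p * Δpl * Γt * q h :=
    mul_nonneg (mul_nonneg (mul_nonneg hApnn hΔ0) hΓ0) hqh.le
  have hlt := Real.rpow_lt_rpow hT hcon hp
  linarith

end GreedyQB
end
end

section
/- Let B = (e_n) be a basis of a p-Banach space X (0 < p ≤ 1) that is quasi-greedy with constant C_qg and partially-symmetric for largest coefficients with constant Δ_pl. Then B is partially-greedy with constant C_pg ≤ A_p·Δ_pl·C_qg·(1 + C_qg^p·η_p(C_qg)^p)^{1/p}, where A_p = (2^p − 1)^{−1/p} and η_p(u) = min_{0<t<1}(1 − t^p)^{−1/p}(1 − (1 + A_p^{−1}u^{−1}t)^{−p})^{−1/p}. -/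
open Finset

noncomputable section

namespace GreedyQB

variable {𝕜 X : Type*} [RCLike 𝕜] [AddCommGroup X] [Module 𝕜 X]

section RpowAux

lemma aux_rpow_le {p x y : ℝ} (hp : 0 < p) (hx : 0 ≤ x) (h : x ^ p ≤ y ^ p) (hy : 0 ≤ y) :
    x ≤ y := by
  have h1 : (x ^ p) ^ p⁻¹ ≤ (y ^ p) ^ p⁻¹ :=
    Real.rpow_le_rpow (Real.rpow_nonneg hx p) h (by positivity)
  rwa [Real.rpow_rpow_inv hx hp.ne', Real.rpow_rpow_inv hy hp.ne'] at h1

lemma aux_le_rpow_inv {p x z : ℝ} (hp : 0 < p) (hx : 0 ≤ x) (h : x ^ p ≤ z) :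
    x ≤ z ^ p⁻¹ := by
  have hz : 0 ≤ z := le_trans (Real.rpow_nonneg hx p) h
  have h1 : (x ^ p) ^ p⁻¹ ≤ z ^ p⁻¹ :=
    Real.rpow_le_rpow (Real.rpow_nonneg hx p) h (by positivity)
  rwa [Real.rpow_rpow_inv hx hp.ne'] at h1

lemma aux_two_rpow_gt_one {p : ℝ} (hp : 0 < p) : (1:ℝ) < 2 ^ p := by
  rw [show (1:ℝ) = (2:ℝ) ^ (0:ℝ) by simp]
  exact Real.rpow_lt_rpow_of_exponent_lt (by norm_num) hp

lemma aux_two_rpow_le_two {p : ℝ} (hp1 : p ≤ 1) : (2:ℝ) ^ p ≤ 2 := by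
  calc (2:ℝ) ^ p ≤ 2 ^ (1:ℝ) := Real.rpow_le_rpow_of_exponent_le (by norm_num) hp1
  _ = 2 := Real.rpow_one 2

lemma aux_Ap_pos {p : ℝ} (hp : 0 < p) : 0 < Ap p :=
  Real.rpow_pos_of_pos (by linarith [aux_two_rpow_gt_one hp]) _

lemma aux_Ap_one_le {p : ℝ} (hp : 0 < p) (hp1 : p ≤ 1) : 1 ≤ Ap p := by
  have h1 : (0:ℝ) < 2 ^ p - 1 := by linarith [aux_two_rpow_gt_one hp]
  have h2 : (2:ℝ) ^ p - 1 ≤ 1 := by linarith [aux_two_rpow_le_two hp1]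
  have : (2 ^ p - 1 : ℝ) ^ (-1/p) = ((2 ^ p - 1 : ℝ) ^ (1/p))⁻¹ := by
    rw [← Real.rpow_neg h1.le]
    congr 1
    ring
  rw [Ap, this]
  have h3 : (2 ^ p - 1 : ℝ) ^ (1/p) ≤ 1 := Real.rpow_le_one h1.le h2 (by positivity)
  have h4 : (0:ℝ) < (2 ^ p - 1 : ℝ) ^ (1/p) := Real.rpow_pos_of_pos h1 _
  exact (one_le_inv₀ h4).mpr h3

lemma aux_Ap_rpow {p : ℝ} (hp : 0 < p) : Ap p ^ p = (2 ^ p - 1)⁻¹ := by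
  have h1 : (0:ℝ) < 2 ^ p - 1 := by linarith [aux_two_rpow_gt_one hp]
  rw [Ap, ← Real.rpow_mul h1.le]
  rw [show -1/p*p = -1 by field_simp, Real.rpow_neg_one]

end RpowAux

section SgnAux

lemma aux_norm_sgn (t : 𝕜) : ‖sgn 𝕜 t‖ = 1 := by
  rw [sgn]
  by_cases h : t = 0
  · simp [h]
  · have : ‖t‖ ≠ 0 := norm_ne_zero_iff.mpr h
    rw [if_neg h, norm_mul, norm_inv, RCLike.norm_ofReal, abs_of_nonneg (norm_nonneg t),
      inv_mul_cancel₀ this]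

lemma aux_sgn_mul (t : 𝕜) : (‖t‖ : 𝕜) * sgn 𝕜 t = t := by
  rw [sgn]
  by_cases h : t = 0
  · simp [h]
  · have : (‖t‖ : 𝕜) ≠ 0 := by
      simpa using norm_ne_zero_iff.mpr h
    rw [if_neg h, ← mul_assoc, mul_inv_cancel₀ this, one_mul]

end SgnAux

section QAux

variable {p : ℝ} {q : X → ℝ}

lemma aux_q_zero (hq : IsPNorm 𝕜 p q) : q 0 = 0 := by
  have := hq.hom 0 0
  simpa using this

lemma aux_q_nonneg (hq : IsPNorm 𝕜 p q) (f : X) : 0 ≤ q f := by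
  by_cases h : f = 0
  · rw [h, aux_q_zero hq]
  · exact (hq.pos f h).le

lemma aux_q_neg (hq : IsPNorm 𝕜 p q) (f : X) : q (-f) = q f := by
  have := hq.hom (-1) f
  simpa using this

lemma aux_q_smul (hq : IsPNorm 𝕜 p q) (r : ℝ) (f : X) :
    q (((r : ℝ) : 𝕜) • f) = |r| * q f := by
  rw [hq.hom, RCLike.norm_ofReal]

lemma aux_q_sub (hq : IsPNorm 𝕜 p q) (f g : X) : q (f - g) ^ p ≤ q f ^ p + q g ^ p := by
  have := hq.ptri f (-g)
  rwa [aux_q_neg hq g, ← sub_eq_add_neg] at this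

lemma aux_q_sub3 (hq : IsPNorm 𝕜 p q) (f g h : X) :
    q (f - g - h) ^ p ≤ q f ^ p + q g ^ p + q h ^ p := by
  calc q (f - g - h) ^ p ≤ q (f - g) ^ p + q h ^ p := aux_q_sub hq _ h
  _ ≤ q f ^ p + q g ^ p + q h ^ p := by linarith [aux_q_sub hq f g]

lemma aux_q_sum (hp : 0 < p) (hq : IsPNorm 𝕜 p q) {ι : Type*} (s : Finset ι) (v : ι → X) :
    q (∑ i ∈ s, v i) ^ p ≤ ∑ i ∈ s, q (v i) ^ p := by
  classical
  induction s using Finset.cons_induction with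
  | empty => simp [aux_q_zero hq, Real.zero_rpow hp.ne']
  | cons a s ha ih =>
      rw [Finset.sum_cons, Finset.sum_cons]
      calc q (v a + ∑ i ∈ s, v i) ^ p ≤ q (v a) ^ p + q (∑ i ∈ s, v i) ^ p := hq.ptri _ _
      _ ≤ q (v a) ^ p + ∑ i ∈ s, q (v i) ^ p := by linarith

end QAux

section CoeffAux

variable {q : X → ℝ} {e : ℕ → X} {c : ℕ → X →ₗ[𝕜] 𝕜}

lemma aux_coeff_sum (hbi : ∀ n m, c n (e m) = if n = m then (1:𝕜) else 0)
    (s : Finset ℕ) (a : ℕ → 𝕜) (n : ℕ) :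
    c n (∑ m ∈ s, a m • e m) = if n ∈ s then a n else 0 := by
  rw [map_sum]
  have h : ∀ m ∈ s, c n (a m • e m) = if m = n then a n else 0 := by
    intro m _
    rw [map_smul, hbi, smul_eq_mul]
    by_cases h : m = n
    · subst h; simp
    · simp [h, Ne.symm h]
  rw [Finset.sum_congr rfl h, Finset.sum_ite_eq' s n (fun _ => a n)]

lemma aux_coeff_proj (hbi : ∀ n m, c n (e m) = if n = m then (1:𝕜) else 0)
    (A : Finset ℕ) (f : X) (n : ℕ) :
    c n (proj c e A f) = if n ∈ A then c n f else 0 :=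
  aux_coeff_sum hbi A (fun m => c m f) n

lemma aux_coeff_indSum (hbi : ∀ n m, c n (e m) = if n = m then (1:𝕜) else 0)
    (A : Finset ℕ) (φ : ℕ → 𝕜) (n : ℕ) :
    c n (indSum e φ A) = if n ∈ A then φ n else 0 :=
  aux_coeff_sum hbi A φ n

/-- A subset of a set with unimodular coefficients is a greedy set of the
indicator sum, and its projection is the sub-indicator-sum. -/
lemma aux_indSum_subset {p : ℝ} (hq : IsPNorm 𝕜 p q)
    (hbi : ∀ n m, c n (e m) = if n = m then (1:𝕜) else 0)
    {u : ℝ} (hqg : QuasiGreedy q e c u)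
    (A' : Finset ℕ) (φ : ℕ → 𝕜) (hφ : ∀ n ∈ A', ‖φ n‖ = 1)
    (E : Finset ℕ) (hE : E ⊆ A') :
    q (indSum e φ E) ≤ u * q (indSum e φ A') := by
  have hgr : GreedySet c (indSum e φ A') E := by
    intro n hn m hm
    rw [aux_coeff_indSum hbi, aux_coeff_indSum hbi, if_pos (hE hn), hφ n (hE hn)]
    by_cases h : m ∈ A'
    · rw [if_pos h, hφ m h]
    · rw [if_neg h, norm_zero]; norm_num
  have hproj : proj c e E (indSum e φ A') = indSum e φ E := by
    simp only [proj, indSum]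
    refine Finset.sum_congr rfl fun m hm => ?_
    rw [aux_coeff_sum hbi A' φ m, if_pos (hE hm)]
  calc q (indSum e φ E) = q (proj c e E (indSum e φ A')) := by rw [hproj]
  _ ≤ u * q (indSum e φ A') := hqg _ _ hgr

end CoeffAux

section HAux

/-- The "halving" convexification lemma: if all sub-indicator sums (against the
ambient vector `y₀`) are bounded by `K`, then arbitrary coefficients in `[0,α]`
(with fixed phases) are bounded by `A_p K`. -/
lemma aux_H {p : ℝ} (hp : 0 < p) {q : X → ℝ} (hq : IsPNorm 𝕜 p q)
    {e : ℕ → X} {M : ℝ} (hM : ∀ n, q (e n) ≤ M)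
    (y₀ : X) (D : Finset ℕ) (φ : ℕ → 𝕜) (hφ : ∀ n ∈ D, ‖φ n‖ = 1)
    {α K : ℝ} (hα : 0 ≤ α)
    (hK : ∀ E ⊆ D, q (y₀ + (α : 𝕜) • indSum e φ E) ≤ K)
    (b : ℕ → ℝ) (hb01 : ∀ m ∈ D, 0 ≤ b m ∧ b m ≤ 1) :
    q (y₀ + ∑ m ∈ D, ((α * b m : ℝ) : 𝕜) • (φ m • e m)) ≤ Ap p * K := by
  classical
  set S : Set ℝ := {x | ∃ b' : ℕ → ℝ, (∀ m ∈ D, 0 ≤ b' m ∧ b' m ≤ 1) ∧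
    x = q (y₀ + ∑ m ∈ D, ((α * b' m : ℝ) : 𝕜) • (φ m • e m))} with hS
  have hmem : ∀ b' : ℕ → ℝ, (∀ m ∈ D, 0 ≤ b' m ∧ b' m ≤ 1) →
      q (y₀ + ∑ m ∈ D, ((α * b' m : ℝ) : 𝕜) • (φ m • e m)) ∈ S := fun b' hb' => ⟨b', hb', rfl⟩
  have hne : S.Nonempty := ⟨_, hmem b hb01⟩
  have hM0 : 0 ≤ M := le_trans (aux_q_nonneg hq (e 0)) (hM 0)
  have hSnn : ∀ x ∈ S, 0 ≤ x := by
    rintro x ⟨b', hb', rfl⟩; exact aux_q_nonneg hq _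
  have hbdd : BddAbove S := by
    refine ⟨(q y₀ ^ p + D.card * (α * M) ^ p) ^ p⁻¹, ?_⟩
    rintro x ⟨b', hb', rfl⟩
    apply aux_le_rpow_inv hp (aux_q_nonneg hq _)
    calc q (y₀ + ∑ m ∈ D, ((α * b' m : ℝ) : 𝕜) • (φ m • e m)) ^ p
        ≤ q y₀ ^ p + q (∑ m ∈ D, ((α * b' m : ℝ) : 𝕜) • (φ m • e m)) ^ p := hq.ptri _ _
      _ ≤ q y₀ ^ p + ∑ m ∈ D, q (((α * b' m : ℝ) : 𝕜) • (φ m • e m)) ^ p := by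
          linarith [aux_q_sum hp hq D (fun m => ((α * b' m : ℝ) : 𝕜) • (φ m • e m))]
      _ ≤ q y₀ ^ p + ∑ m ∈ D, (α * M) ^ p := by
          have : ∀ m ∈ D, q (((α * b' m : ℝ) : 𝕜) • (φ m • e m)) ^ p ≤ (α * M) ^ p := by
            intro m hm
            apply Real.rpow_le_rpow (aux_q_nonneg hq _) ?_ hp.le
            · rw [aux_q_smul hq, hq.hom, hφ m hm, one_mul,
                abs_of_nonneg (mul_nonneg hα (hb' m hm).1)]
              have h1 : α * b' m ≤ α := by nlinarith [(hb' m hm).1, (hb' m hm).2]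
              have h2 : 0 ≤ q (e m) := aux_q_nonneg hq _
              nlinarith [hM m]
          linarith [Finset.sum_le_sum this]
      _ = q y₀ ^ p + D.card * (α * M) ^ p := by rw [Finset.sum_const, nsmul_eq_mul]
  set Θ := sSup S with hΘ
  have hΘ0 : 0 ≤ Θ := le_trans (aux_q_nonneg hq _) (le_csSup hbdd (hmem b hb01))
  have hK0 : 0 ≤ K := le_trans (aux_q_nonneg hq _) (hK ∅ (Finset.empty_subset D))
  have hkey : ∀ x ∈ S, x ^ p ≤ (2⁻¹:ℝ) ^ p * (K ^ p + Θ ^ p) := by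
    rintro x ⟨b', hb', rfl⟩
    set E₁ := D.filter (fun m => 1/2 < b' m) with hE₁
    set b'' := fun m => if 1/2 < b' m then 2 * b' m - 1 else 2 * b' m with hb''
    have hb''eq : ∀ m, b'' m = if 1/2 < b' m then 2 * b' m - 1 else 2 * b' m := fun m => rfl
    have hb''01 : ∀ m ∈ D, 0 ≤ b'' m ∧ b'' m ≤ 1 := by
      intro m hm
      obtain ⟨h0, h1⟩ := hb' m hm
      rw [hb''eq m]
      by_cases h : 1/2 < b' m
      · rw [if_pos h]; constructor <;> linarith
      · rw [if_neg h]; push_neg at h; constructor <;> linarith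
    have hEsum : (α:𝕜) • indSum e φ E₁
        = ∑ m ∈ D, (if 1/2 < b' m then ((α:ℝ):𝕜) else 0) • (φ m • e m) := by
      rw [indSum, Finset.smul_sum, hE₁, Finset.sum_filter]
      refine Finset.sum_congr rfl fun m hm => ?_
      by_cases h : 1/2 < b' m <;> simp [h]
    have hid : y₀ + ∑ m ∈ D, ((α * b' m:ℝ):𝕜) • (φ m • e m)
        = ((2⁻¹:ℝ):𝕜) • (y₀ + (α:𝕜) • indSum e φ E₁)
          + ((2⁻¹:ℝ):𝕜) • (y₀ + ∑ m ∈ D, ((α * b'' m:ℝ):𝕜) • (φ m • e m)) := by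
      rw [smul_add, smul_add, hEsum, Finset.smul_sum, Finset.smul_sum]
      have hy : ((2⁻¹:ℝ):𝕜) • y₀ + ((2⁻¹:ℝ):𝕜) • y₀ = y₀ := by
        rw [← add_smul, show ((2⁻¹:ℝ):𝕜) + ((2⁻¹:ℝ):𝕜) = 1 by push_cast; norm_num, one_smul]
      have hsum : ∑ m ∈ D, ((α * b' m:ℝ):𝕜) • (φ m • e m)
          = ∑ m ∈ D, (((2⁻¹:ℝ):𝕜) • (if 1/2 < b' m then ((α:ℝ):𝕜) else 0) • (φ m • e m)
              + ((2⁻¹:ℝ):𝕜) • (((α * b'' m:ℝ):𝕜) • (φ m • e m))) := by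
        refine Finset.sum_congr rfl fun m hm => ?_
        have hfir : ((2⁻¹:ℝ):𝕜) * (if 1/2 < b' m then ((α:ℝ):𝕜) else 0)
            = ((if 1/2 < b' m then (2⁻¹ * α : ℝ) else 0 : ℝ):𝕜) := by
          by_cases h : 1/2 < b' m
          · rw [if_pos h, if_pos h, RCLike.ofReal_mul]
          · rw [if_neg h, if_neg h, mul_zero, RCLike.ofReal_zero]
        have hsc : ((α * b' m:ℝ):𝕜)
            = ((if 1/2 < b' m then (2⁻¹ * α : ℝ) else 0 : ℝ):𝕜)
              + ((2⁻¹:ℝ):𝕜) * ((α * b'' m:ℝ):𝕜) := by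
          by_cases h : 1/2 < b' m
          · rw [if_pos h, hb''eq m, if_pos h]
            push_cast; ring
          · rw [if_neg h, hb''eq m, if_neg h]
            push_cast; ring
        rw [smul_smul ((2⁻¹:ℝ):𝕜) (if 1/2 < b' m then ((α:ℝ):𝕜) else 0), hfir,
          smul_smul ((2⁻¹:ℝ):𝕜) ((α * b'' m:ℝ):𝕜), ← add_smul, ← hsc]
      rw [hsum, Finset.sum_add_distrib]
      conv_lhs => rw [← hy]
      abel
    rw [hid]
    have hq1 : q (((2⁻¹:ℝ):𝕜) • (y₀ + (α:𝕜) • indSum e φ E₁)) = 2⁻¹ * q (y₀ + (α:𝕜) • indSum e φ E₁) := by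
      rw [aux_q_smul hq]; norm_num
    have hq2 : q (((2⁻¹:ℝ):𝕜) • (y₀ + ∑ m ∈ D, ((α * b'' m:ℝ):𝕜) • (φ m • e m)))
        = 2⁻¹ * q (y₀ + ∑ m ∈ D, ((α * b'' m:ℝ):𝕜) • (φ m • e m)) := by
      rw [aux_q_smul hq]; norm_num
    calc q (((2⁻¹:ℝ):𝕜) • (y₀ + (α:𝕜) • indSum e φ E₁)
          + ((2⁻¹:ℝ):𝕜) • (y₀ + ∑ m ∈ D, ((α * b'' m:ℝ):𝕜) • (φ m • e m))) ^ p
        ≤ q (((2⁻¹:ℝ):𝕜) • (y₀ + (α:𝕜) • indSum e φ E₁)) ^ p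
          + q (((2⁻¹:ℝ):𝕜) • (y₀ + ∑ m ∈ D, ((α * b'' m:ℝ):𝕜) • (φ m • e m))) ^ p := hq.ptri _ _
      _ = (2⁻¹:ℝ) ^ p * q (y₀ + (α:𝕜) • indSum e φ E₁) ^ p
          + (2⁻¹:ℝ) ^ p * q (y₀ + ∑ m ∈ D, ((α * b'' m:ℝ):𝕜) • (φ m • e m)) ^ p := by
          rw [hq1, hq2, Real.mul_rpow (by norm_num) (aux_q_nonneg hq _),
            Real.mul_rpow (by norm_num) (aux_q_nonneg hq _)]
      _ ≤ (2⁻¹:ℝ) ^ p * (K ^ p + Θ ^ p) := by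
          have hA : q (y₀ + (α:𝕜) • indSum e φ E₁) ^ p ≤ K ^ p :=
            Real.rpow_le_rpow (aux_q_nonneg hq _) (hK E₁ (Finset.filter_subset _ _)) hp.le
          have hB : q (y₀ + ∑ m ∈ D, ((α * b'' m:ℝ):𝕜) • (φ m • e m)) ^ p ≤ Θ ^ p :=
            Real.rpow_le_rpow (aux_q_nonneg hq _) (le_csSup hbdd (hmem b'' hb''01)) hp.le
          have h2p : (0:ℝ) ≤ (2⁻¹:ℝ) ^ p := Real.rpow_nonneg (by norm_num) p
          nlinarith
  have hz0 : 0 ≤ (2⁻¹:ℝ) ^ p * (K ^ p + Θ ^ p) := by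
    have := Real.rpow_nonneg (show (0:ℝ) ≤ 2⁻¹ by norm_num) p
    have := Real.rpow_nonneg hK0 p
    have := Real.rpow_nonneg hΘ0 p
    nlinarith
  have hΘle : Θ ≤ ((2⁻¹:ℝ) ^ p * (K ^ p + Θ ^ p)) ^ p⁻¹ :=
    csSup_le hne (fun x hx => aux_le_rpow_inv hp (hSnn x hx) (hkey x hx))
  have hΘp : Θ ^ p ≤ (2⁻¹:ℝ) ^ p * (K ^ p + Θ ^ p) := by
    calc Θ ^ p ≤ (((2⁻¹:ℝ) ^ p * (K ^ p + Θ ^ p)) ^ p⁻¹) ^ p :=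
          Real.rpow_le_rpow hΘ0 hΘle (by positivity)
    _ = (2⁻¹:ℝ) ^ p * (K ^ p + Θ ^ p) := Real.rpow_inv_rpow hz0 hp.ne'
  have h2p : (2⁻¹:ℝ) ^ p = ((2:ℝ) ^ p)⁻¹ := Real.inv_rpow (by norm_num) p
  have hgt : (1:ℝ) < 2 ^ p := aux_two_rpow_gt_one hp
  have hfin : Θ ^ p ≤ Ap p ^ p * K ^ p := by
    rw [aux_Ap_rpow hp]
    rw [h2p] at hΘp
    have h2pos : (0:ℝ) < 2 ^ p := by linarith
    have h3 : Θ ^ p * (2 ^ p - 1) ≤ K ^ p := by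
      have h4 := mul_le_mul_of_nonneg_left hΘp h2pos.le
      rw [mul_inv_cancel_left₀ h2pos.ne'] at h4
      nlinarith
    rw [inv_mul_eq_div, le_div_iff₀ (by linarith)]
    linarith
  have hΘfin : Θ ≤ Ap p * K := by
    apply aux_rpow_le hp hΘ0 ?_ (mul_nonneg (aux_Ap_pos hp).le hK0)
    rwa [Real.mul_rpow (aux_Ap_pos hp).le hK0]
  exact le_trans (le_csSup hbdd (hmem b hb01)) hΘfin

end HAux


section TAux

set_option maxHeartbeats 1600000 in
/-- The key truncation estimate: the `σ'` bound, for each `t ∈ (0,1)`. -/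
lemma aux_T {q : X → ℝ} {e : ℕ → X} {c : ℕ → X →ₗ[𝕜] 𝕜}
    {p : ℝ} (hp : 0 < p) (hp1 : p ≤ 1) (hq : IsPNorm 𝕜 p q)
    (hbi : ∀ n m, c n (e m) = if n = m then (1:𝕜) else 0)
    {M : ℝ} (hM : ∀ n, q (e n) ≤ M) (hMc : ∀ n (f : X), ‖c n f‖ ≤ M * q f)
    {u : ℝ} (hu : 1 ≤ u) (hqg : QuasiGreedy q e c u)
    (g : X) (A' : Finset ℕ)
    {α : ℝ} (hα : 0 < α) (hmin : ∀ m ∈ A', α ≤ ‖c m g‖) (hout : ∀ m ∉ A', ‖c m g‖ ≤ α)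
    {t : ℝ} (ht0 : 0 < t) (ht1 : t < 1) :
    q (g - proj c e A' g + ((α:ℝ):𝕜) • indSum e (fun n => sgn 𝕜 (c n g)) A') ^ p
      ≤ u ^ p * (1 + u ^ p * ((1 - (1 + (Ap p)⁻¹ * u⁻¹ * t) ^ (-p))⁻¹ * (1 - t ^ p)⁻¹))
        * q g ^ p := by
  classical
  set ε' : ℕ → 𝕜 := fun n => sgn 𝕜 (c n g) with hε'
  have hφ' : ∀ n ∈ A', ‖ε' n‖ = 1 := fun n _ => aux_norm_sgn _
  have hu0 : (0:ℝ) < u := lt_of_lt_of_le one_pos hu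
  have hup1 : 1 ≤ u ^ p := Real.one_le_rpow hu hp.le
  have hup0 : 0 < u ^ p := Real.rpow_pos_of_pos hu0 _
  have hQ0 : 0 ≤ q g := aux_q_nonneg hq g
  have hQp0 : 0 ≤ q g ^ p := Real.rpow_nonneg hQ0 _
  have hAp0 : 0 < Ap p := aux_Ap_pos hp
  have hAp1 : 1 ≤ Ap p := aux_Ap_one_le hp hp1
  set τ : ℝ := (Ap p)⁻¹ * u⁻¹ * t with hτdef
  have hτ0 : 0 < τ := by rw [hτdef]; positivity
  have hτ1 : τ ≤ 1 := by
    have h1 : (Ap p)⁻¹ ≤ 1 := by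
      rw [inv_le_one_iff₀]; right; exact hAp1
    have h2 : u⁻¹ ≤ 1 := by
      rw [inv_le_one_iff₀]; right; exact hu
    have h3 : (0:ℝ) ≤ (Ap p)⁻¹ := by positivity
    have h4 : (0:ℝ) ≤ u⁻¹ := by positivity
    rw [hτdef]
    have h5 : (Ap p)⁻¹ * u⁻¹ ≤ 1 := by nlinarith
    nlinarith [mul_nonneg h3 h4]
  have hτt : τ * (Ap p * u) = t := by
    rw [hτdef]; field_simp
  have h1τ : (1:ℝ) < 1 + τ := by linarith
  have h1τ0 : (0:ℝ) < 1 + τ := by linarith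
  set w : ℝ := (1 + τ)⁻¹ with hwdef
  have hw0 : 0 < w := by rw [hwdef]; positivity
  have hw1 : w < 1 := by
    rw [hwdef, inv_lt_one_iff₀]; right; exact h1τ
  have hwne1 : w ≠ 1 := ne_of_lt hw1
  set s : ℝ := (1 + τ) ^ (-p) with hsdef
  have hs_eq : w ^ p = s := by
    rw [hwdef, hsdef, Real.inv_rpow h1τ0.le, Real.rpow_neg h1τ0.le]
  have hs0 : 0 < s := by rw [hsdef]; exact Real.rpow_pos_of_pos h1τ0 _
  have hs1 : s < 1 := by
    rw [← hs_eq]; exact Real.rpow_lt_one hw0.le hw1 hp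
  have htp1 : t ^ p < 1 := Real.rpow_lt_one ht0.le ht1 hp
  have htp0 : 0 < t ^ p := Real.rpow_pos_of_pos ht0 _
  have hγ : ∀ m ∈ A', 1 ≤ ‖c m g‖ / α := fun m hm => (one_le_div hα).mpr (hmin m hm)
  obtain ⟨J, hJ⟩ : ∃ J : ℕ, ∀ m ∈ A', ‖c m g‖ / α < (1 + τ) ^ J := by
    obtain ⟨J, hJ⟩ := pow_unbounded_of_one_lt (M * q g / α) h1τ
    exact ⟨J, fun m hm =>
      lt_of_le_of_lt (div_le_div_of_nonneg_right (hMc m g) hα.le) hJ⟩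
  set P : ℕ → ℕ → Prop := fun m n => (1 + τ) ^ n ≤ ‖c m g‖ / α with hPdef
  set jm : ℕ → ℕ := fun m => Nat.findGreatest (P m) J with hjmdef
  have hjmJ : ∀ m, jm m ≤ J := fun m => Nat.findGreatest_le J
  have hjm_le : ∀ m ∈ A', (1 + τ) ^ (jm m) ≤ ‖c m g‖ / α := by
    intro m hm
    have h0 : P m 0 := by
      show (1 + τ) ^ 0 ≤ ‖c m g‖ / α
      simpa using hγ m hm
    exact Nat.findGreatest_spec (Nat.zero_le J) h0
  have hjm_lt : ∀ m ∈ A', ‖c m g‖ / α < (1 + τ) ^ (jm m + 1) := by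
    intro m hm
    have hlt : jm m < J := by
      rcases lt_or_eq_of_le (hjmJ m) with h | h
      · exact h
      · exfalso
        have h2 := hjm_le m hm
        rw [h] at h2
        exact absurd (hJ m hm) (not_lt.mpr h2)
    have h3 : ¬ P m (jm m + 1) :=
      Nat.findGreatest_is_greatest (Nat.lt_succ_self (jm m)) hlt
    rw [hPdef] at h3
    exact not_le.mp h3
  set d : ℕ → ℝ := fun m => (‖c m g‖ / α) * w ^ (jm m) - 1 with hddef
  have hpowpos : ∀ n : ℕ, (0:ℝ) < (1 + τ) ^ n := fun n => pow_pos h1τ0 n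
  have hwpow : ∀ n : ℕ, w ^ n = ((1 + τ) ^ n)⁻¹ := fun n => by
    rw [hwdef, inv_pow]
  have hd0 : ∀ m ∈ A', 0 ≤ d m := by
    intro m hm
    have h1 : (1:ℝ) ≤ (‖c m g‖ / α) * w ^ (jm m) := by
      rw [hwpow, ← div_eq_mul_inv, le_div_iff₀ (hpowpos _), one_mul]
      exact hjm_le m hm
    have h2 : d m = (‖c m g‖ / α) * w ^ (jm m) - 1 := by rw [hddef]
    linarith [h2 ▸ (by linarith : (0:ℝ) ≤ (‖c m g‖ / α) * w ^ (jm m) - 1)]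
  have hdτ : ∀ m ∈ A', d m ≤ τ := by
    intro m hm
    have h1 : (‖c m g‖ / α) * w ^ (jm m) ≤ 1 + τ := by
      rw [hwpow, ← div_eq_mul_inv, div_le_iff₀ (hpowpos _)]
      calc ‖c m g‖ / α ≤ (1 + τ) ^ (jm m + 1) := (hjm_lt m hm).le
      _ = (1 + τ) * (1 + τ) ^ (jm m) := by ring
    have h2 : d m = (‖c m g‖ / α) * w ^ (jm m) - 1 := by rw [hddef]
    rw [h2]
    linarith
  set G : ℕ → Finset ℕ := fun j => A'.filter (fun m => α * (1 + τ) ^ j ≤ ‖c m g‖) with hGdef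
  have hGgr : ∀ j : ℕ, GreedySet c g (G j) := by
    intro j n hn m hm
    rw [hGdef, Finset.mem_filter] at hn
    have hn2 : α * (1 + τ) ^ j ≤ ‖c n g‖ := hn.2
    by_cases hmA : m ∈ A'
    · have h5 : ¬ (α * (1 + τ) ^ j ≤ ‖c m g‖) := by
        intro hcon
        exact hm (by rw [hGdef, Finset.mem_filter]; exact ⟨hmA, hcon⟩)
      linarith [not_le.mp h5]
    · have h1 : ‖c m g‖ ≤ α := hout m hmA
      have hpow1 : (1:ℝ) ≤ (1 + τ) ^ j := one_le_pow₀ h1τ.le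
      nlinarith
  have hA'gr : GreedySet c g A' := by
    intro n hn m hm
    exact le_trans (hout m hm) (hmin n hn)
  have hqA' : q (proj c e A' g) ≤ u * q g := hqg g A' hA'gr
  have hqG : ∀ j : ℕ, q (proj c e (G j) g) ≤ u * q g := fun j => hqg g (G j) (hGgr j)
  have hcond : ∀ m ∈ A', ∀ j ∈ Finset.range J,
      (α * (1 + τ) ^ (j+1) ≤ ‖c m g‖ ↔ j < jm m) := by
    intro m hm j hj
    rw [Finset.mem_range] at hj
    constructor
    · intro h
      have h2 : P m (j+1) := by
        show (1 + τ) ^ (j+1) ≤ ‖c m g‖ / α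
        rw [le_div_iff₀ hα]
        linarith
      have h3 := Nat.le_findGreatest (Nat.succ_le_of_lt hj) h2
      have h4 : jm m = Nat.findGreatest (P m) J := rfl
      omega
    · intro h
      have h2 : (1 + τ) ^ (j+1) ≤ (1 + τ) ^ (jm m) :=
        pow_le_pow_right₀ h1τ.le (Nat.succ_le_of_lt h)
      have h3 : (1 + τ) ^ (j+1) ≤ ‖c m g‖ / α := le_trans h2 (hjm_le m hm)
      rw [le_div_iff₀ hα] at h3
      linarith
  have hgeo : ∀ n : ℕ, τ * ∑ j ∈ Finset.range n, w ^ (j+1) = 1 - w ^ n := by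
    intro n
    have h1 : ∑ j ∈ Finset.range n, w ^ (j+1) = w * ((w ^ n - 1) / (w - 1)) := by
      rw [← geom_sum_eq hwne1 n, Finset.mul_sum]
      exact Finset.sum_congr rfl fun j _ => by ring
    rw [h1, hwdef]
    have hne : (1:ℝ) + τ ≠ 0 := ne_of_gt h1τ0
    field_simp
    rw [show (1:ℝ) - (1 + τ) = -τ by ring, div_neg, mul_div_cancel_left₀ _ hτ0.ne']
    ring
  set Sv : X := ∑ j ∈ Finset.range J, ((w ^ (j+1) : ℝ):𝕜) • proj c e (G (j+1)) g with hSvdef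
  set R'v : X := ∑ m ∈ A', ((α * d m : ℝ):𝕜) • (ε' m • e m) with hR'def
  have hτSv : ((τ:ℝ):𝕜) • Sv = ∑ m ∈ A', ((1 - w ^ (jm m) : ℝ):𝕜) • (c m g • e m) := by
    rw [hSvdef, Finset.smul_sum]
    have step1 : ∀ j ∈ Finset.range J,
        ((τ:ℝ):𝕜) • (((w ^ (j+1) : ℝ):𝕜) • proj c e (G (j+1)) g)
          = ∑ m ∈ A', (if j < jm m then ((τ * w ^ (j+1) : ℝ):𝕜) else 0) • (c m g • e m) := by
      intro j hj
      rw [smul_smul, ← RCLike.ofReal_mul]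
      rw [show proj c e (G (j+1)) g
          = ∑ m ∈ A', if α * (1 + τ) ^ (j+1) ≤ ‖c m g‖ then c m g • e m else 0 from by
        rw [hGdef, proj]; exact Finset.sum_filter _ _]
      rw [Finset.smul_sum]
      refine Finset.sum_congr rfl fun m hm => ?_
      by_cases h : α * (1 + τ) ^ (j+1) ≤ ‖c m g‖
      · rw [if_pos h, if_pos ((hcond m hm j hj).mp h)]
      · rw [if_neg h, if_neg (fun hc => h ((hcond m hm j hj).mpr hc)), smul_zero, zero_smul]
    rw [Finset.sum_congr rfl step1, Finset.sum_comm]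
    refine Finset.sum_congr rfl fun m hm => ?_
    rw [← Finset.sum_smul]
    congr 1
    have hfilter : (Finset.range J).filter (fun j => j < jm m) = Finset.range (jm m) := by
      ext x
      simp only [Finset.mem_filter, Finset.mem_range]
      constructor
      · rintro ⟨_, h2⟩; exact h2
      · intro h; exact ⟨lt_of_lt_of_le h (hjmJ m), h⟩
    rw [show (∑ j ∈ Finset.range J, if j < jm m then ((τ * w ^ (j+1) : ℝ):𝕜) else 0)
        = ∑ j ∈ (Finset.range J).filter (fun j => j < jm m), ((τ * w ^ (j+1) : ℝ):𝕜) from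
      (Finset.sum_filter _ _).symm]
    rw [hfilter, ← RCLike.ofReal_sum]
    congr 1
    rw [← Finset.mul_sum]
    exact hgeo (jm m)
  have hId : proj c e A' g
      = ((α:ℝ):𝕜) • indSum e ε' A' + R'v + ((τ:ℝ):𝕜) • Sv := by
    rw [hτSv, hR'def, indSum, Finset.smul_sum, ← Finset.sum_add_distrib,
      ← Finset.sum_add_distrib, proj]
    refine Finset.sum_congr rfl fun m hm => ?_
    have hsm : c m g = ((‖c m g‖:ℝ):𝕜) * ε' m := (aux_sgn_mul (c m g)).symm
    rw [smul_smul, smul_smul, smul_smul, ← add_smul, ← add_smul]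
    congr 1
    have hgoal : (‖c m g‖ : ℝ) = α + α * d m + (1 - w ^ (jm m)) * ‖c m g‖ := by
      have h2 : d m = (‖c m g‖ / α) * w ^ (jm m) - 1 := by rw [hddef]
      rw [h2]
      field_simp
      ring
    calc c m g = ((‖c m g‖:ℝ):𝕜) * ε' m := hsm
    _ = ((α + α * d m + (1 - w ^ (jm m)) * ‖c m g‖ : ℝ):𝕜) * ε' m := by rw [← hgoal]
    _ = ((α:ℝ):𝕜) * ε' m + ((α * d m : ℝ):𝕜) * ε' m
        + ((1 - w ^ (jm m) : ℝ):𝕜) * (((‖c m g‖:ℝ):𝕜) * ε' m) := by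
      push_cast
      ring
    _ = ((α:ℝ):𝕜) * ε' m + ((α * d m : ℝ):𝕜) * ε' m
        + ((1 - w ^ (jm m) : ℝ):𝕜) * c m g := by rw [← hsm]
  set R : ℝ := q (indSum e ε' A') with hRdef
  have hR0 : 0 ≤ R := aux_q_nonneg hq _
  have hM0 : 0 ≤ M := le_trans (aux_q_nonneg hq (e 0)) (hM 0)
  have hKind : ∀ E ⊆ A', q ((0:X) + ((1:ℝ):𝕜) • indSum e ε' E) ≤ u * R := by
    intro E hE
    rw [RCLike.ofReal_one, one_smul, zero_add]
    exact aux_indSum_subset hq hbi hqg A' ε' hφ' E hE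
  have hΓ : q ((0:X) + ∑ m ∈ A', ((1 * (d m / τ) : ℝ):𝕜) • (ε' m • e m)) ≤ Ap p * (u * R) := by
    refine aux_H hp hq hM (0:X) A' ε' hφ' (by norm_num) hKind (fun m => d m / τ) ?_
    intro m hm
    constructor
    · exact div_nonneg (hd0 m hm) hτ0.le
    · rw [div_le_one hτ0]
      exact hdτ m hm
  have hR'q : q R'v ≤ (α * τ) * (Ap p * (u * R)) := by
    have hR'eq : R'v
        = ((α * τ : ℝ):𝕜) • ((0:X) + ∑ m ∈ A', ((1 * (d m / τ) : ℝ):𝕜) • (ε' m • e m)) := by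
      rw [zero_add, hR'def, Finset.smul_sum]
      refine Finset.sum_congr rfl fun m hm => ?_
      rw [smul_smul (((α * τ : ℝ)):𝕜) ((1 * (d m / τ) : ℝ):𝕜), ← RCLike.ofReal_mul]
      congr 1
      rw [RCLike.ofReal_inj]
      field_simp
    rw [hR'eq, aux_q_smul hq, abs_of_nonneg (by positivity)]
    have h2 : 0 ≤ α * τ := by positivity
    exact mul_le_mul_of_nonneg_left hΓ h2
  have hR'qp : q R'v ^ p ≤ t ^ p * (α * R) ^ p := by
    have h1 : q R'v ≤ t * (α * R) := by
      calc q R'v ≤ (α * τ) * (Ap p * (u * R)) := hR'q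
      _ = (τ * (Ap p * u)) * (α * R) := by ring
      _ = t * (α * R) := by rw [hτt]
    calc q R'v ^ p ≤ (t * (α * R)) ^ p :=
          Real.rpow_le_rpow (aux_q_nonneg hq _) h1 hp.le
    _ = t ^ p * (α * R) ^ p := Real.mul_rpow ht0.le (by positivity)
  have hgeosum : ∑ j ∈ Finset.range J, s ^ (j+1) ≤ s / (1 - s) := by
    have h4 : (0:ℝ) < 1 - s := by linarith
    have h1 : ∑ j ∈ Finset.range J, s ^ (j+1) = s * ∑ j ∈ Finset.range J, s ^ j := by
      rw [Finset.mul_sum]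
      exact Finset.sum_congr rfl fun j _ => by ring
    have h2 : ∑ j ∈ Finset.range J, s ^ j = (s ^ J - 1)/(s - 1) := geom_sum_eq (ne_of_lt hs1) J
    have h5 : (0:ℝ) ≤ s ^ J := pow_nonneg hs0.le J
    have heq : (s ^ J - 1)/(s - 1) = (1 - s ^ J)/(1 - s) := by
      rw [div_eq_div_iff (by linarith : s - 1 < 0).ne (by linarith : (0:ℝ) < 1 - s).ne']
      ring
    have h3 : (s ^ J - 1)/(s - 1) ≤ (1 - s)⁻¹ := by
      rw [heq]
      calc (1 - s ^ J)/(1 - s) ≤ 1/(1 - s) :=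
            div_le_div_of_nonneg_right (by linarith) h4.le
      _ = (1 - s)⁻¹ := one_div _
    calc ∑ j ∈ Finset.range J, s ^ (j+1) = s * ((s ^ J - 1)/(s - 1)) := by rw [h1, h2]
    _ ≤ s * (1 - s)⁻¹ := mul_le_mul_of_nonneg_left h3 hs0.le
    _ = s / (1 - s) := by rw [div_eq_mul_inv]
  have hSvqp : q Sv ^ p ≤ (s / (1 - s)) * (u ^ p * q g ^ p) := by
    have h1 : q Sv ^ p
        ≤ ∑ j ∈ Finset.range J, q (((w ^ (j+1) : ℝ):𝕜) • proj c e (G (j+1)) g) ^ p := by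
      rw [hSvdef]
      exact aux_q_sum hp hq _ _
    have h2 : ∀ j ∈ Finset.range J, q (((w ^ (j+1) : ℝ):𝕜) • proj c e (G (j+1)) g) ^ p
        ≤ s ^ (j+1) * (u ^ p * q g ^ p) := by
      intro j hj
      rw [aux_q_smul hq, abs_of_nonneg (pow_nonneg hw0.le _),
        Real.mul_rpow (pow_nonneg hw0.le _) (aux_q_nonneg hq _)]
      have h3 : (w ^ (j+1) : ℝ) ^ p = s ^ (j+1) := by
        rw [← Real.rpow_natCast w (j+1), ← Real.rpow_mul hw0.le,
          mul_comm (((j+1:ℕ)):ℝ) p, Real.rpow_mul hw0.le, hs_eq, Real.rpow_natCast]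
      have h4 : q (proj c e (G (j+1)) g) ^ p ≤ u ^ p * q g ^ p := by
        calc q (proj c e (G (j+1)) g) ^ p ≤ (u * q g) ^ p :=
              Real.rpow_le_rpow (aux_q_nonneg hq _) (hqG (j+1)) hp.le
        _ = u ^ p * q g ^ p := Real.mul_rpow hu0.le hQ0
      rw [h3]
      exact mul_le_mul_of_nonneg_left h4 (pow_nonneg hs0.le _)
    calc q Sv ^ p ≤ ∑ j ∈ Finset.range J, q (((w ^ (j+1) : ℝ):𝕜) • proj c e (G (j+1)) g) ^ p := h1
    _ ≤ ∑ j ∈ Finset.range J, s ^ (j+1) * (u ^ p * q g ^ p) := Finset.sum_le_sum h2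
    _ = (∑ j ∈ Finset.range J, s ^ (j+1)) * (u ^ p * q g ^ p) := by rw [Finset.sum_mul]
    _ ≤ (s / (1 - s)) * (u ^ p * q g ^ p) := by
        apply mul_le_mul_of_nonneg_right hgeosum
        positivity
  have hτSvqp : q (((τ:ℝ):𝕜) • Sv) ^ p ≤ (s/(1-s)) * (u ^ p * q g ^ p) := by
    rw [aux_q_smul hq, abs_of_nonneg hτ0.le,
      Real.mul_rpow hτ0.le (aux_q_nonneg hq _)]
    have hτp1 : τ ^ p ≤ 1 := Real.rpow_le_one hτ0.le hτ1 hp.le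
    calc τ ^ p * q Sv ^ p ≤ 1 * ((s/(1-s)) * (u ^ p * q g ^ p)) :=
          mul_le_mul hτp1 hSvqp (Real.rpow_nonneg (aux_q_nonneg hq _) p) zero_le_one
    _ = (s/(1-s)) * (u ^ p * q g ^ p) := one_mul _
  have hqind : q (((α:ℝ):𝕜) • indSum e ε' A') = α * R := by
    rw [aux_q_smul hq, abs_of_nonneg hα.le]
  have hid2 : ((α:ℝ):𝕜) • indSum e ε' A' = proj c e A' g - R'v - ((τ:ℝ):𝕜) • Sv := by
    rw [hId]; abel
  have hprojp : q (proj c e A' g) ^ p ≤ u ^ p * q g ^ p := by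
    calc q (proj c e A' g) ^ p ≤ (u * q g) ^ p :=
          Real.rpow_le_rpow (aux_q_nonneg hq _) hqA' hp.le
    _ = u ^ p * q g ^ p := Real.mul_rpow hu0.le hQ0
  have hX : (α * R) ^ p ≤ u ^ p * q g ^ p * ((1 - s)⁻¹ * (1 - t ^ p)⁻¹) := by
    have h2 : q (((α:ℝ):𝕜) • indSum e ε' A') ^ p
        ≤ q (proj c e A' g) ^ p + q R'v ^ p + q (((τ:ℝ):𝕜) • Sv) ^ p := by
      rw [hid2]
      exact aux_q_sub3 hq _ _ _
    rw [hqind] at h2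
    have h1 : (α * R) ^ p ≤ u ^ p * q g ^ p + (t ^ p * (α * R) ^ p
        + (s/(1-s)) * (u ^ p * q g ^ p)) := by
      linarith [hR'qp, hτSvqp, hprojp]
    have hne1 : (1:ℝ) - s ≠ 0 := ne_of_gt (by linarith)
    have h5 : u ^ p * q g ^ p + (s/(1-s)) * (u ^ p * q g ^ p)
        = u ^ p * q g ^ p * (1 - s)⁻¹ := by
      field_simp
      ring
    have h4 : (α * R) ^ p * (1 - t ^ p) ≤ u ^ p * q g ^ p * (1 - s)⁻¹ := by
      nlinarith [h1, h5]
    have h7 : (0:ℝ) < 1 - t ^ p := by linarith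
    calc (α * R) ^ p = (α * R) ^ p * (1 - t ^ p) * (1 - t ^ p)⁻¹ := by field_simp
    _ ≤ (u ^ p * q g ^ p * (1 - s)⁻¹) * (1 - t ^ p)⁻¹ :=
        mul_le_mul_of_nonneg_right h4 (by positivity)
    _ = u ^ p * q g ^ p * ((1 - s)⁻¹ * (1 - t ^ p)⁻¹) := by ring
  have hσid : g - proj c e A' g + ((α:ℝ):𝕜) • indSum e ε' A'
      = g - R'v - ((τ:ℝ):𝕜) • Sv := by
    rw [hId]; abel
  have hσ : q (g - proj c e A' g + ((α:ℝ):𝕜) • indSum e ε' A') ^ p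
      ≤ q g ^ p + t ^ p * ((α * R) ^ p) + (s/(1-s)) * (u ^ p * q g ^ p) := by
    rw [hσid]
    have h0 := aux_q_sub3 hq g R'v (((τ:ℝ):𝕜) • Sv)
    linarith [hR'qp, hτSvqp]
  set Fp : ℝ := (1 - s)⁻¹ * (1 - t ^ p)⁻¹ with hFpdef
  have hFp0 : 0 < Fp := by
    rw [hFpdef]
    exact mul_pos (inv_pos.mpr (by linarith)) (inv_pos.mpr (by linarith))
  have hkey2 : s/(1-s) + t ^ p * Fp ≤ Fp := by
    have hne1 : (1:ℝ) - s ≠ 0 := ne_of_gt (by linarith)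
    have hne2 : (1:ℝ) - t ^ p ≠ 0 := ne_of_gt (by linarith)
    have e1 : s/(1-s) = s * (1 - t ^ p) * Fp := by
      rw [hFpdef]
      field_simp
    have e3 : s * (1 - t ^ p) + t ^ p ≤ 1 := by nlinarith
    calc s/(1-s) + t ^ p * Fp = (s * (1 - t ^ p) + t ^ p) * Fp := by rw [e1]; ring
    _ ≤ 1 * Fp := mul_le_mul_of_nonneg_right e3 hFp0.le
    _ = Fp := one_mul _
  have hfin : q g ^ p + t ^ p * ((α * R) ^ p) + (s/(1-s)) * (u ^ p * q g ^ p)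
      ≤ u ^ p * (1 + u ^ p * Fp) * q g ^ p := by
    have h8 : t ^ p * ((α * R) ^ p) ≤ t ^ p * (u ^ p * q g ^ p * Fp) := by
      exact mul_le_mul_of_nonneg_left hX htp0.le
    have h9 : t ^ p * (u ^ p * q g ^ p * Fp) + (s/(1-s)) * (u ^ p * q g ^ p)
        = (u ^ p * q g ^ p) * (t ^ p * Fp + s/(1-s)) := by ring
    have h10 : (u ^ p * q g ^ p) * (t ^ p * Fp + s/(1-s)) ≤ (u ^ p * q g ^ p) * Fp := by
      apply mul_le_mul_of_nonneg_left _ (mul_nonneg hup0.le hQp0)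
      linarith [hkey2]
    have h11 : q g ^ p + u ^ p * q g ^ p * Fp ≤ u ^ p * (1 + u ^ p * Fp) * q g ^ p := by
      nlinarith [mul_nonneg (sub_nonneg.mpr hup1) hQp0,
        mul_nonneg (mul_nonneg (mul_nonneg (sub_nonneg.mpr hup1) hup0.le) hFp0.le) hQp0]
    linarith [h8]
  exact le_trans hσ hfin

end TAux


set_option maxHeartbeats 2000000


variable (q : X → ℝ) (e : ℕ → X) (c : ℕ → X →ₗ[𝕜] 𝕜)


/-- quasi-greedy + partially-symmetric for largest coefficients implies
partially-greedy with `C_pg ≤ A_p Δ_pl C_qg (1 + C_qg^p η_p(C_qg)^p)^{1/p}`. -/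
theorem stmt13 (p : ℝ) (hp : 0 < p) (hp1 : p ≤ 1)
    (hq : IsPNorm 𝕜 p q) (hb : IsBasis q e c)
    (Cqg Δpl : ℝ) (hqg : QuasiGreedy q e c Cqg) (hΔ : PSLC q e c Δpl) :
    PartiallyGreedy q e c
      (Ap p * Δpl * Cqg * (1 + Cqg ^ p * eta p Cqg ^ p) ^ (1 / p)) := by
  classical
  intro f A hA k hk
  obtain ⟨M, hMsem⟩ := hb.semin
  have hM : ∀ n, q (e n) ≤ M := fun n => (hMsem n).1
  have hMc : ∀ n (x : X), ‖c n x‖ ≤ M * q x := fun n x => (hMsem n).2 x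
  have hbi := hb.biorth
  have he0 : e 0 ≠ 0 := by
    intro hcon
    have h1 := hbi 0 0
    rw [hcon, map_zero] at h1
    simp at h1
  have hqe0 : 0 < q (e 0) := hq.pos _ he0
  have hu : 1 ≤ Cqg := by
    have hgr : GreedySet c (e 0) {0} := by
      intro n hn m hm
      rw [Finset.mem_singleton] at hn
      subst hn
      have hm0 : m ≠ 0 := by
        intro hcon; exact hm (by simp [hcon])
      rw [hbi m 0, if_neg hm0, hbi 0 0, if_pos rfl, norm_zero]
      norm_num
    have hproj : proj c e {0} (e 0) = e 0 := by
      rw [proj, Finset.sum_singleton, hbi 0 0, if_pos rfl, one_smul]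
    have h2 := hqg (e 0) {0} hgr
    rw [hproj] at h2
    nlinarith
  have hu0 : (0:ℝ) < Cqg := lt_of_lt_of_le one_pos hu
  have hup1 : 1 ≤ Cqg ^ p := Real.one_le_rpow hu hp.le
  have hΔ1 : 1 ≤ Δpl := by
    have hsign : IsSign (fun _ : ℕ => (1:𝕜)) (∅ : Finset ℕ) := by
      intro n hn; exact absurd hn (Finset.notMem_empty n)
    have hcoef : ∀ n, ‖c n (e 0)‖ ≤ 1 := by
      intro n
      rw [hbi n 0]
      by_cases h : n = 0 <;> simp [h]
    have h2 := hΔ ∅ ∅ (fun _ => 1) (fun _ => 1) (e 0) hsign hsign le_rfl hcoef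
      (fun a ha => absurd ha (Finset.notMem_empty a))
      (fun a ha => absurd ha (Finset.notMem_empty a))
      (fun b hb' => absurd hb' (Finset.notMem_empty b))
    simp only [indSum, Finset.sum_empty, add_zero] at h2
    nlinarith
  have hAp0 : 0 < Ap p := aux_Ap_pos hp
  have hAp1 : 1 ≤ Ap p := aux_Ap_one_le hp hp1
  have hη0 : 0 ≤ eta p Cqg := by
    apply Real.sInf_nonneg
    rintro x ⟨t, htIoo, rfl⟩
    obtain ⟨ht0, ht1⟩ := htIoo
    have h1 : (0:ℝ) ≤ 1 - t ^ p := by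
      have := Real.rpow_le_one ht0.le ht1.le hp.le
      linarith
    have h2 : (0:ℝ) ≤ 1 - (1 + (Ap p)⁻¹ * Cqg⁻¹ * t) ^ (-p) := by
      have hbase : (1:ℝ) ≤ 1 + (Ap p)⁻¹ * Cqg⁻¹ * t := by
        have : (0:ℝ) ≤ (Ap p)⁻¹ * Cqg⁻¹ * t := by positivity
        linarith
      have := Real.rpow_le_one_of_one_le_of_nonpos hbase (by linarith : -p ≤ 0)
      linarith
    exact mul_nonneg (Real.rpow_nonneg h1 _) (Real.rpow_nonneg h2 _)
  have hηp0 : 0 ≤ Cqg ^ p * eta p Cqg ^ p :=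
    mul_nonneg (Real.rpow_nonneg hu0.le _) (Real.rpow_nonneg hη0 _)
  have hCC1 : 1 ≤ Ap p * Δpl * Cqg * (1 + Cqg ^ p * eta p Cqg ^ p) ^ (1/p) := by
    have h1 : (1:ℝ) ≤ (1 + Cqg ^ p * eta p Cqg ^ p) ^ (1/p) :=
      Real.one_le_rpow (by linarith) (by positivity)
    have a1 : (1:ℝ) ≤ Ap p * Δpl := by nlinarith
    have a2 : (1:ℝ) ≤ Ap p * Δpl * Cqg := by nlinarith
    nlinarith
  have hg0 : 0 ≤ q (f - psum c e k f) := aux_q_nonneg hq _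
  by_cases hAne : A = ∅
  · subst hAne
    have hk0 : k = 0 := by simpa using hk
    subst hk0
    have h1 : proj c e (∅ : Finset ℕ) f = 0 := by simp [proj]
    have h2 : psum c e 0 f = 0 := by simp [psum, proj]
    rw [h1, h2, sub_zero]
    nlinarith [aux_q_nonneg hq f]
  have hAne' : A.Nonempty := Finset.nonempty_iff_ne_empty.mpr hAne
  set α := A.inf' hAne' (fun n => ‖c n f‖) with hαdef
  have hα_le : ∀ n ∈ A, α ≤ ‖c n f‖ := fun n hn => Finset.inf'_le _ hn
  obtain ⟨a₀, ha₀A, hα_eq⟩ := Finset.exists_mem_eq_inf' hAne' (fun n => ‖c n f‖)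
  have hα_eq' : α = ‖c a₀ f‖ := hα_eq
  have hout_f : ∀ m ∉ A, ‖c m f‖ ≤ α := by
    intro m hm
    rw [hα_eq']
    exact hA a₀ ha₀A m hm
  have hα0 : 0 ≤ α := by rw [hα_eq']; exact norm_nonneg _
  set g := f - psum c e k f with hgdef
  have hQ0 : 0 ≤ q g := aux_q_nonneg hq g
  have hQp0 : 0 ≤ q g ^ p := Real.rpow_nonneg hQ0 _
  have hcg : ∀ m, c m g = if m ∈ Finset.range k then 0 else c m f := by
    intro m
    rw [hgdef, map_sub, psum, aux_coeff_proj hbi]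
    by_cases h : m ∈ Finset.range k <;> simp [h]
  by_cases hα_zero : α = 0
  · have hfA : f - proj c e A f = 0 := by
      apply hb.total
      intro n
      rw [map_sub, aux_coeff_proj hbi]
      by_cases h : n ∈ A
      · simp [h]
      · have h2 := hout_f n h
        rw [hα_zero] at h2
        have h3 : c n f = 0 := norm_le_zero_iff.mp h2
        simp [h, h3]
    rw [hfA, aux_q_zero hq]
    have : (0:ℝ) ≤ Ap p * Δpl * Cqg * (1 + Cqg ^ p * eta p Cqg ^ p) ^ (1/p) := by linarith
    exact mul_nonneg this hQ0
  have hα_pos : 0 < α := lt_of_le_of_ne hα0 (Ne.symm hα_zero)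
  set A' := A \ Finset.range k with hA'def
  set B := Finset.range k \ A with hBdef
  have hBA' : B.card ≤ A'.card := by
    have h1 : (A ∩ Finset.range k).card + (A \ Finset.range k).card = A.card :=
      Finset.card_inter_add_card_sdiff A (Finset.range k)
    have h2 : (Finset.range k ∩ A).card + (Finset.range k \ A).card = k := by
      rw [Finset.card_inter_add_card_sdiff, Finset.card_range]
    rw [Finset.inter_comm] at h2
    rw [hBdef, hA'def]
    omega
  have hcg_A' : ∀ m ∈ A', c m g = c m f := by
    intro m hm
    rw [hA'def, Finset.mem_sdiff] at hm
    rw [hcg m, if_neg hm.2]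
  have hminA' : ∀ m ∈ A', α ≤ ‖c m g‖ := by
    intro m hm
    rw [hcg_A' m hm]
    rw [hA'def, Finset.mem_sdiff] at hm
    exact hα_le m hm.1
  have houtA' : ∀ m ∉ A', ‖c m g‖ ≤ α := by
    intro m hm
    rw [hcg m]
    by_cases h1 : m ∈ Finset.range k
    · rw [if_pos h1, norm_zero]; exact hα0
    · rw [if_neg h1]
      by_cases h2 : m ∈ A
      · exact absurd (by rw [hA'def, Finset.mem_sdiff]; exact ⟨h2, h1⟩) hm
      · exact hout_f m h2
  set ε : ℕ → 𝕜 := fun n => sgn 𝕜 (c n f) with hεdef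
  set ε' : ℕ → 𝕜 := fun n => sgn 𝕜 (c n g) with hε'def
  have hsignε : ∀ (E : Finset ℕ), IsSign ε E := fun E n _ => aux_norm_sgn _
  have hsignε' : ∀ (E : Finset ℕ), IsSign ε' E := fun E n _ => aux_norm_sgn _
  set y := g - proj c e A' g with hydef
  have hcy : ∀ n, c n y = if n ∈ A' then 0 else c n g := by
    intro n
    rw [hydef, map_sub, aux_coeff_proj hbi]
    by_cases h : n ∈ A' <;> simp [h]
  have hy_coef : ∀ n, ‖c n y‖ ≤ α := by
    intro n
    rw [hcy n]
    by_cases h : n ∈ A'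
    · rw [if_pos h, norm_zero]; exact hα0
    · rw [if_neg h]; exact houtA' n h
  have hy_supp : ∀ n, c n y ≠ 0 → k ≤ n := by
    intro n hne
    by_contra hcon
    push_neg at hcon
    apply hne
    rw [hcy n]
    by_cases h : n ∈ A'
    · rw [if_pos h]
    · rw [if_neg h, hcg n, if_pos (Finset.mem_range.mpr hcon)]
  -- PSLC, scaled by α
  have hPSLC : ∀ E ⊆ B, q (y + ((α:ℝ):𝕜) • indSum e ε E)
      ≤ Δpl * q (y + ((α:ℝ):𝕜) • indSum e ε' A') := by
    intro E hE
    have hcard : E.card ≤ A'.card := le_trans (Finset.card_le_card hE) hBA'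
    have hcoef : ∀ n, ‖c n (((α⁻¹:ℝ):𝕜) • y)‖ ≤ 1 := by
      intro n
      rw [map_smul, norm_smul, RCLike.norm_ofReal, abs_of_nonneg (by positivity)]
      have := hy_coef n
      rw [← mul_le_mul_iff_right₀ hα_pos, mul_one, ← mul_assoc, mul_inv_cancel₀ hα_pos.ne', one_mul]
      exact this
    have hlt1 : ∀ a ∈ E, ∀ n, c n (((α⁻¹:ℝ):𝕜) • y) ≠ 0 → a < n := by
      intro a ha n hne
      have ha2 : a < k := by
        have := hE ha
        rw [hBdef, Finset.mem_sdiff] at this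
        exact Finset.mem_range.mp this.1
      have hn2 : k ≤ n := by
        apply hy_supp
        intro hcon
        apply hne
        rw [map_smul, hcon, smul_zero]
      omega
    have hlt2 : ∀ a ∈ E, ∀ b ∈ A', a < b := by
      intro a ha b hb'
      have ha2 : a < k := by
        have := hE ha
        rw [hBdef, Finset.mem_sdiff] at this
        exact Finset.mem_range.mp this.1
      have hb2 : k ≤ b := by
        rw [hA'def, Finset.mem_sdiff] at hb'
        exact le_of_not_gt (fun hcon => hb'.2 (Finset.mem_range.mpr hcon))
      omega
    have hzero : ∀ b ∈ A', c b (((α⁻¹:ℝ):𝕜) • y) = 0 := by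
      intro b hb'
      rw [map_smul, hcy b, if_pos hb', smul_zero]
    have h1 := hΔ E A' ε ε' (((α⁻¹:ℝ):𝕜) • y) (hsignε E) (hsignε' A') hcard hcoef hlt1 hlt2 hzero
    have hsc : ∀ (v : X), y + ((α:ℝ):𝕜) • v = ((α:ℝ):𝕜) • (((α⁻¹:ℝ):𝕜) • y + v) := by
      intro v
      rw [smul_add, smul_smul, ← RCLike.ofReal_mul, mul_inv_cancel₀ hα_pos.ne',
        RCLike.ofReal_one, one_smul]
    rw [hsc (indSum e ε E), hsc (indSum e ε' A'), aux_q_smul hq, aux_q_smul hq,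
      abs_of_nonneg hα0]
    calc α * q (((α⁻¹:ℝ):𝕜) • y + indSum e ε E)
        ≤ α * (Δpl * q (((α⁻¹:ℝ):𝕜) • y + indSum e ε' A')) :=
          mul_le_mul_of_nonneg_left h1 hα0
    _ = Δpl * (α * q (((α⁻¹:ℝ):𝕜) • y + indSum e ε' A')) := by ring
  -- decomposition identity
  have h1 : proj c e A' g = proj c e A' f := by
    rw [proj, proj]
    exact Finset.sum_congr rfl fun m hm => by rw [hcg_A' m hm]
  have hy2 : y = f - proj c e (Finset.range k) f - proj c e A' f := by
    rw [hydef, h1, hgdef]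
    simp only [psum]
  have hxid : f - proj c e A f = y + proj c e B f := by
    have h2 : proj c e (A ∩ Finset.range k) f + proj c e A' f = proj c e A f := by
      rw [hA'def, proj, proj, proj]
      exact Finset.sum_inter_add_sum_sdiff A (Finset.range k) _
    have h3 : proj c e (Finset.range k ∩ A) f + proj c e B f = proj c e (Finset.range k) f := by
      rw [hBdef, proj, proj, proj]
      exact Finset.sum_inter_add_sum_sdiff (Finset.range k) A _
    have h4 : Finset.range k ∩ A = A ∩ Finset.range k := Finset.inter_comm _ _
    rw [h4] at h3
    rw [hy2, ← h2, ← h3]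
    abel
  -- projection onto B as a coefficient sum
  have hprojB : ∑ n ∈ B, ((α * (‖c n f‖ / α) : ℝ):𝕜) • (ε n • e n) = proj c e B f := by
    rw [proj]
    refine Finset.sum_congr rfl fun n hn => ?_
    rw [show α * (‖c n f‖ / α) = ‖c n f‖ from by field_simp, smul_smul]
    congr 1
    exact aux_sgn_mul (c n f)
  -- main halving application
  have hmain : q (f - proj c e A f)
      ≤ Ap p * (Δpl * q (y + ((α:ℝ):𝕜) • indSum e ε' A')) := by
    rw [hxid, ← hprojB]
    refine aux_H hp hq hM y B ε (hsignε B) hα0 hPSLC (fun n => ‖c n f‖ / α) ?_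
    intro n hn
    constructor
    · positivity
    · rw [div_le_one hα_pos]
      apply hout_f
      rw [hBdef, Finset.mem_sdiff] at hn
      exact hn.2
  -- truncation bound for each t
  have hT : ∀ t : ℝ, 0 < t → t < 1 →
      q (y + ((α:ℝ):𝕜) • indSum e ε' A') ^ p
        ≤ Cqg ^ p * (1 + Cqg ^ p * ((1 - (1 + (Ap p)⁻¹ * Cqg⁻¹ * t) ^ (-p))⁻¹
            * (1 - t ^ p)⁻¹)) * q g ^ p := by
    intro t ht0 ht1
    have := aux_T hp hp1 hq hbi hM hMc hu hqg g A' hα_pos hminA' houtA' ht0 ht1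
    rw [← hydef] at this
    exact this
  -- combine
  set σ' := q (y + ((α:ℝ):𝕜) • indSum e ε' A') with hσ'def
  have hσ'0 : 0 ≤ σ' := aux_q_nonneg hq _
  have hxp : q (f - proj c e A f) ^ p ≤ Ap p ^ p * Δpl ^ p * σ' ^ p := by
    calc q (f - proj c e A f) ^ p ≤ (Ap p * (Δpl * σ')) ^ p :=
          Real.rpow_le_rpow (aux_q_nonneg hq _) hmain hp.le
    _ = Ap p ^ p * (Δpl * σ') ^ p := Real.mul_rpow hAp0.le (by positivity)
    _ = Ap p ^ p * (Δpl ^ p * σ' ^ p) := by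
        rw [Real.mul_rpow (by linarith : (0:ℝ) ≤ Δpl) hσ'0]
    _ = Ap p ^ p * Δpl ^ p * σ' ^ p := by ring
  set aC := Ap p ^ p * Δpl ^ p * Cqg ^ p * q g ^ p with haCdef
  set bC := Ap p ^ p * Δpl ^ p * (Cqg ^ p * Cqg ^ p) * q g ^ p with hbCdef
  have hApp0 : 0 ≤ Ap p ^ p := Real.rpow_nonneg hAp0.le _
  have hΔp0 : 0 ≤ Δpl ^ p := Real.rpow_nonneg (by linarith) _
  have haC0 : 0 ≤ aC := by
    rw [haCdef]
    positivity
  have hbC0 : 0 ≤ bC := by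
    rw [hbCdef]
    positivity
  have hchain : ∀ t : ℝ, 0 < t → t < 1 →
      q (f - proj c e A f) ^ p
        ≤ aC + bC * ((1 - (1 + (Ap p)⁻¹ * Cqg⁻¹ * t) ^ (-p))⁻¹ * (1 - t ^ p)⁻¹) := by
    intro t ht0 ht1
    have h5 := hT t ht0 ht1
    have h6 : Ap p ^ p * Δpl ^ p * σ' ^ p
        ≤ Ap p ^ p * Δpl ^ p * (Cqg ^ p * (1 + Cqg ^ p * ((1 - (1 + (Ap p)⁻¹ * Cqg⁻¹ * t) ^ (-p))⁻¹
            * (1 - t ^ p)⁻¹)) * q g ^ p) :=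
      mul_le_mul_of_nonneg_left h5 (mul_nonneg hApp0 hΔp0)
    have h7 : Ap p ^ p * Δpl ^ p * (Cqg ^ p * (1 + Cqg ^ p * ((1 - (1 + (Ap p)⁻¹ * Cqg⁻¹ * t) ^ (-p))⁻¹
            * (1 - t ^ p)⁻¹)) * q g ^ p)
        = aC + bC * ((1 - (1 + (Ap p)⁻¹ * Cqg⁻¹ * t) ^ (-p))⁻¹ * (1 - t ^ p)⁻¹) := by
      rw [haCdef, hbCdef]
      ring
    linarith [hxp]
  -- pass to the infimum
  have hfinal : q (f - proj c e A f) ^ p ≤ aC + bC * eta p Cqg ^ p := by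
    rcases eq_or_lt_of_le hbC0 with hbC | hbC
    · have h8 := hchain (1/2) (by norm_num) (by norm_num)
      rw [← hbC] at h8 ⊢
      simpa using h8
    · by_cases hKneg : q (f - proj c e A f) ^ p ≤ aC
      · nlinarith [mul_nonneg hbC.le (Real.rpow_nonneg hη0 p)]
      · push_neg at hKneg
        set K := (q (f - proj c e A f) ^ p - aC) / bC with hKdef
        have hK0 : 0 < K := div_pos (by linarith) hbC
        have hKF : ∀ t : ℝ, 0 < t → t < 1 →
            K ≤ (1 - (1 + (Ap p)⁻¹ * Cqg⁻¹ * t) ^ (-p))⁻¹ * (1 - t ^ p)⁻¹ := by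
          intro t ht0 ht1
          have h9 := hchain t ht0 ht1
          rw [hKdef, div_le_iff₀ hbC]
          nlinarith
        have hKeta : K ≤ eta p Cqg ^ p := by
          have h10 : K ^ p⁻¹ ≤ eta p Cqg := by
            apply le_csInf
            · exact ⟨_, Set.mem_image_of_mem _ (Set.mem_Ioo.mpr ⟨(by norm_num : (0:ℝ) < 1/2),
                (by norm_num : (1:ℝ)/2 < 1)⟩)⟩
            · rintro x ⟨t, htIoo, rfl⟩
              obtain ⟨ht0, ht1⟩ := htIoo
              have h11 : (0:ℝ) < 1 - t ^ p := by
                have := Real.rpow_lt_one ht0.le ht1 hp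
                linarith
              have h12 : (0:ℝ) < 1 - (1 + (Ap p)⁻¹ * Cqg⁻¹ * t) ^ (-p) := by
                have hbase : (1:ℝ) < 1 + (Ap p)⁻¹ * Cqg⁻¹ * t := by
                  have : (0:ℝ) < (Ap p)⁻¹ * Cqg⁻¹ * t := by positivity
                  linarith
                have := Real.rpow_lt_one_of_one_lt_of_neg hbase (by linarith : -p < 0)
                linarith
              have hFpow : ((1 - t ^ p) ^ (-1/p) * (1 - (1 + (Ap p)⁻¹ * Cqg⁻¹ * t) ^ (-p)) ^ (-1/p)) ^ p
                  = (1 - (1 + (Ap p)⁻¹ * Cqg⁻¹ * t) ^ (-p))⁻¹ * (1 - t ^ p)⁻¹ := by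
                rw [Real.mul_rpow (Real.rpow_nonneg h11.le _) (Real.rpow_nonneg h12.le _),
                  ← Real.rpow_mul h11.le, ← Real.rpow_mul h12.le,
                  show -1/p*p = -1 from by field_simp, Real.rpow_neg_one, Real.rpow_neg_one]
                ring
              have h13 : K ≤ ((1 - t ^ p) ^ (-1/p) * (1 - (1 + (Ap p)⁻¹ * Cqg⁻¹ * t) ^ (-p)) ^ (-1/p)) ^ p := by
                rw [hFpow]
                exact hKF t ht0 ht1
              have h14 : K ^ p⁻¹ ≤ (((1 - t ^ p) ^ (-1/p) * (1 - (1 + (Ap p)⁻¹ * Cqg⁻¹ * t) ^ (-p)) ^ (-1/p)) ^ p) ^ p⁻¹ :=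
                Real.rpow_le_rpow hK0.le h13 (by positivity)
              rwa [Real.rpow_rpow_inv (by positivity) hp.ne'] at h14
          have h15 : (K ^ p⁻¹) ^ p ≤ eta p Cqg ^ p :=
            Real.rpow_le_rpow (Real.rpow_nonneg hK0.le _) h10 hp.le
          rwa [Real.rpow_inv_rpow hK0.le hp.ne'] at h15
        rw [hKdef, div_le_iff₀ hbC] at hKeta
        nlinarith
  -- conclusion
  have hCpow : ((Ap p * Δpl * Cqg * (1 + Cqg ^ p * eta p Cqg ^ p) ^ (1/p)) * q g) ^ p
      = aC + bC * eta p Cqg ^ p := by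
    have h16 : (0:ℝ) ≤ Ap p * Δpl * Cqg := by positivity
    have h17 : (0:ℝ) ≤ (1 + Cqg ^ p * eta p Cqg ^ p) ^ (1/p) :=
      Real.rpow_nonneg (by linarith) _
    rw [Real.mul_rpow (by positivity) hQ0,
      Real.mul_rpow h16 h17,
      Real.mul_rpow (by positivity : (0:ℝ) ≤ Ap p * Δpl) hu0.le,
      Real.mul_rpow hAp0.le (by linarith : (0:ℝ) ≤ Δpl)]
    rw [show (1/p : ℝ) = p⁻¹ from one_div p, Real.rpow_inv_rpow (by linarith) hp.ne']
    rw [haCdef, hbCdef]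
    ring
  apply aux_rpow_le hp (aux_q_nonneg hq _) _ (by positivity)
  rw [hCpow]
  exact hfinal


end GreedyQB
end
end
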